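/- arXiv:1308.6255 — 3 statements merged into one kernel-verified Lean document; each statement's English description precedes it below -/
import Mathlib

section
/- For any system of weights α satisfying the normalization condition, and for any permutation π of N, the quantities pr^α_π(P) := Π_{i∈N} α_i(C_i^π, P_{[C_i^π]}) form a probability distribution over partitions P of N: Σ_{P∈𝒫} pr^α_π(P) = 1. -/
open Finset

open scoped Classical

/-- A partition of the player set `Fin n`; following the paper's convention,
`∅` is a member of every partition. -/
def IsPartition {n : ℕ} (P : Finset (Finset (Fin n))) : Prop :=
  ∅ ∈ P ∧ ∀ a : Fin n, ∃! B : Finset (Fin n), B ∈ P ∧ a ∈ B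

/-- The set `𝒫` of all partitions of `Fin n`. -/
noncomputable def allPartitions (n : ℕ) : Finset (Finset (Finset (Fin n))) :=
  Finset.univ.filter IsPartition

/-- `C_i^π`: the set of players appearing after `i` in the ordering `π`. -/
def Cafter {n : ℕ} (π : Equiv.Perm (Fin n)) (i : Fin n) : Finset (Fin n) :=
  Finset.univ.filter fun j => π.symm i < π.symm j

/-- `P_{[S]}` : the partition obtained from `P` by merging all members of `S`
into a single coalition. -/
def pmerge {n : ℕ} (P : Finset (Finset (Fin n))) (S : Finset (Fin n)) :
    Finset (Finset (Fin n)) :=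
  P.image (· \ S) ∪ {S}

/-- `τ_i^T(P)` : the partition obtained from `P` by transferring `i` from its
coalition to the coalition `T` (taking `T = ∅` means that `i` forms a new
singleton coalition). -/
def moveTo {n : ℕ} (P : Finset (Finset (Fin n))) (i : Fin n) (T : Finset (Fin n)) :
    Finset (Finset (Fin n)) :=
  ((P.erase T).image fun B => B.erase i) ∪ {insert i T} ∪ {∅}

/-- A partition-function game: a real value for every (embedded) coalition. -/
abbrev Game (n : ℕ) := Finset (Fin n) → Finset (Finset (Fin n)) → ℝ

/-- A system of weights `α_i(S, P)` (meaningful for `i ∉ S`). -/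
abbrev Weights (n : ℕ) := Fin n → Finset (Fin n) → Finset (Finset (Fin n)) → ℝ

/-- The partition `{N, ∅}` in which the grand coalition is embedded. -/
def grandPart (n : ℕ) : Finset (Finset (Fin n)) := {Finset.univ, ∅}

/-- Normalization: for every embedded coalition `(S, P)` with `i ∈ S`,
`∑_{T ∈ P_{−S}} α_i(S_{−i}, τ_i^T(P)) = 1`. -/
def Normalized {n : ℕ} (w : Weights n) : Prop :=
  ∀ (i : Fin n) (S : Finset (Fin n)) (P : Finset (Finset (Fin n))),
    IsPartition P → S ∈ P → i ∈ S →
      ∑ T ∈ P.erase S, w i (S.erase i) (moveTo P i T) = 1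

/-- Weights take values in `[0, 1]`. -/
def InRange {n : ℕ} (w : Weights n) : Prop :=
  ∀ (i : Fin n) (S : Finset (Fin n)) (P : Finset (Finset (Fin n))),
    i ∉ S → 0 ≤ w i S P ∧ w i S P ≤ 1

/-- `pr^α_π(P) = ∏_{i ∈ N} α_i(C_i^π, P_{[C_i^π]})`. -/
noncomputable def pr {n : ℕ} (w : Weights n) (π : Equiv.Perm (Fin n))
    (P : Finset (Finset (Fin n))) : ℝ :=
  ∏ i : Fin n, w i (Cafter π i) (pmerge P (Cafter π i))

/-- The extended Shapley value `φ^α` (formula (1) of the paper). -/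
noncomputable def esv {n : ℕ} (w : Weights n) (v : Game n) (i : Fin n) : ℝ :=
  ((n.factorial : ℝ))⁻¹ * ∑ π : Equiv.Perm (Fin n), ∑ P ∈ allPartitions n,
    pr w π P *
      (v (insert i (Cafter π i)) (pmerge P (insert i (Cafter π i))) -
        v (Cafter π i) (pmerge P (Cafter π i)))

/-- The `α`-marginal contribution `[mc^α_i(v)](S, P)`. -/
noncomputable def mc {n : ℕ} (w : Weights n) (v : Game n) (i : Fin n)
    (S : Finset (Fin n)) (P : Finset (Finset (Fin n))) : ℝ :=
  ∑ T ∈ P.erase S, w i (S.erase i) (moveTo P i T) * (v S P - v (S.erase i) (moveTo P i T))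

/-- A genuine partition-function game: it vanishes off embedded coalitions
(and on the empty coalition). -/
def IsGame {n : ℕ} (v : Game n) : Prop :=
  ∀ S P, ¬ (IsPartition P ∧ S ∈ P ∧ S ≠ ∅) → v S P = 0

/-- The simple game `e^{(S₀, P₀)}`. -/
noncomputable def sgame {n : ℕ} (S₀ : Finset (Fin n)) (P₀ : Finset (Finset (Fin n))) :
    Game n :=
  fun S P => if S = S₀ ∧ P = P₀ then 1 else 0

/-- The permuted game `π(v)`, with `π(v)(S, P) = v(π(S), π(P))`. -/
def permGame {n : ℕ} (π : Equiv.Perm (Fin n)) (v : Game n) : Game n :=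
  fun S P => v (S.image π) (P.image (Finset.image π))

/-!
Reveal the partition one player at a time in the order `π`. Let `S_m` be the set of players
from position `m` on. By induction on `m`, the products of the weights of the players before
position `m` sum to one over the partitions in which `S_m` is a block. For the step, let `i` be
the player at position `m`: the partitions in which `S_m \ {i}` is a block correspond
bijectively to the pairs `(Q, T)` where `S_m` is a block of `Q` and `T ≠ S_m` is a block of `Q`
(possibly `∅`), via moving `i` from `S_m` to `T`. Every earlier player `j` has `C_j ⊇ S_m`, so
merging `C_j` undoes the move and the weight of `j` depends on `Q` only, while the weights of `i`
sum to one over `T` by normalization. The case `m = n` is the theorem.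
-/

section Partitions

variable {n : ℕ} {P Q Q' : Finset (Finset (Fin n))} {A B C S T : Finset (Fin n)} {a i : Fin n}

theorem IsPartition.mk' (h0 : ∅ ∈ P) (hex : ∀ a, ∃ B ∈ P, a ∈ B)
    (huniq : ∀ B ∈ P, ∀ C ∈ P, ∀ a ∈ B, a ∈ C → B = C) : IsPartition P :=
  ⟨h0, fun a =>
    let ⟨B, hB, haB⟩ := hex a
    ⟨B, ⟨hB, haB⟩, fun C hC => huniq C hC.1 B hB a hC.2 haB⟩⟩

theorem IsPartition.exists_mem (hP : IsPartition P) (a : Fin n) : ∃ B ∈ P, a ∈ B :=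
  let ⟨B, hB, _⟩ := hP.2 a
  ⟨B, hB.1, hB.2⟩

theorem IsPartition.eq_of_mem (hP : IsPartition P) (hB : B ∈ P) (hC : C ∈ P) (haB : a ∈ B)
    (haC : a ∈ C) : B = C :=
  (hP.2 a).unique ⟨hB, haB⟩ ⟨hC, haC⟩

theorem IsPartition.disjoint (hP : IsPartition P) (hB : B ∈ P) (hC : C ∈ P) (hBC : B ≠ C) :
    Disjoint B C :=
  disjoint_left.2 fun _ haB haC => hBC (hP.eq_of_mem hB hC haB haC)

theorem IsPartition.eq_of_subset (hP : IsPartition P) (hQ : IsPartition Q) (h : P ⊆ Q) :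
    P = Q := by
  refine subset_antisymm h fun B hB => ?_
  obtain rfl | ⟨a, haB⟩ := B.eq_empty_or_nonempty
  · exact hP.1
  obtain ⟨C, hC, haC⟩ := hP.exists_mem a
  rwa [hQ.eq_of_mem hB (h hC) haB haC]

theorem isPartition_grandPart : IsPartition (grandPart n) :=
  .mk' (by simp [grandPart]) (fun a => ⟨univ, by simp [grandPart]⟩)
    (fun B hB C hC a haB haC => by
      simp only [grandPart, mem_insert, mem_singleton] at hB hC
      rcases hB with rfl | rfl <;> rcases hC with rfl | rfl <;> simp_all)

theorem IsPartition.eq_grandPart (hP : IsPartition P) (h : univ ∈ P) : P = grandPart n :=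
  (isPartition_grandPart.eq_of_subset hP (by simp [grandPart, insert_subset_iff, h, hP.1])).symm

theorem mem_pmerge : A ∈ pmerge P S ↔ A = S ∨ ∃ B ∈ P, B \ S = A := by
  simp [pmerge]

theorem pmerge_pmerge (h0 : ∅ ∈ P) (hST : S ⊆ T) : pmerge (pmerge P S) T = pmerge P T := by
  have : (∅ : Finset (Fin n)) \ T ∈ P.image (· \ T) := mem_image_of_mem _ h0
  simp_all [pmerge, image_image, Function.comp_def, sdiff_eq_empty_iff_subset.2 hST,
    sdiff_sdiff_left]

theorem isPartition_pmerge (hP : IsPartition P) (S : Finset (Fin n)) :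
    IsPartition (pmerge P S) := by
  refine .mk' (mem_pmerge.2 (.inr ⟨∅, hP.1, empty_sdiff S⟩)) (fun a => ?_) ?_
  · by_cases haS : a ∈ S
    · exact ⟨S, mem_pmerge.2 (.inl rfl), haS⟩
    · obtain ⟨B, hB, haB⟩ := hP.exists_mem a
      exact ⟨B \ S, mem_pmerge.2 (.inr ⟨B, hB, rfl⟩), mem_sdiff.2 ⟨haB, haS⟩⟩
  · intro B' hB' C' hC' a haB haC
    rcases mem_pmerge.1 hB' with rfl | ⟨B, hB, rfl⟩ <;>
      rcases mem_pmerge.1 hC' with rfl | ⟨C, hC, rfl⟩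
    · rfl
    · exact absurd haB (mem_sdiff.1 haC).2
    · exact absurd haC (mem_sdiff.1 haB).2
    · rw [hP.eq_of_mem hB hC (mem_sdiff.1 haB).1 (mem_sdiff.1 haC).1]

theorem IsPartition.pmerge_eq_self (hP : IsPartition P) (hS : S ∈ P) : pmerge P S = P := by
  refine (hP.eq_of_subset (isPartition_pmerge hP S) fun B hB => ?_).symm
  rw [mem_pmerge]
  by_cases hBS : B = S
  · exact .inl hBS
  · exact .inr ⟨B, hB, sdiff_eq_self_of_disjoint (hP.disjoint hB hS hBS)⟩

theorem mem_moveTo :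
    A ∈ moveTo Q i T ↔ A = insert i T ∨ A = ∅ ∨ ∃ B ∈ Q, B ≠ T ∧ B.erase i = A := by
  simp [moveTo, and_assoc, and_left_comm, or_left_comm]

theorem isPartition_moveTo (hQ : IsPartition Q) (hT : T ∈ Q) :
    IsPartition (moveTo Q i T) := by
  refine .mk' (mem_moveTo.2 (.inr (.inl rfl))) (fun a => ?_) ?_
  · obtain ⟨B, hB, haB⟩ := hQ.exists_mem a
    by_cases hai : a = i
    · exact ⟨insert i T, mem_moveTo.2 (.inl rfl), hai ▸ mem_insert_self a T⟩
    by_cases hBT : B = T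
    · exact ⟨insert i T, mem_moveTo.2 (.inl rfl), mem_insert_of_mem (hBT ▸ haB)⟩
    · exact ⟨B.erase i, mem_moveTo.2 (.inr (.inr ⟨B, hB, hBT, rfl⟩)), mem_erase.2 ⟨hai, haB⟩⟩
  · intro B' hB' C' hC' a haB haC
    rcases mem_moveTo.1 hB' with rfl | rfl | ⟨B, hB, hBT, rfl⟩ <;>
      rcases mem_moveTo.1 hC' with rfl | rfl | ⟨C, hC, hCT, rfl⟩ <;>
      simp only [mem_erase, mem_insert, notMem_empty] at haB haC
    · rfl
    · exact absurd (hQ.eq_of_mem hC hT haC.2 (haB.resolve_left haC.1)) hCT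
    · exact absurd (hQ.eq_of_mem hB hT haB.2 (haC.resolve_left haB.1)) hBT
    · rw [hQ.eq_of_mem hB hC haB.2 haC.2]

theorem erase_mem_moveTo (hS : S ∈ Q) (hT : T ∈ Q.erase S) : S.erase i ∈ moveTo Q i T :=
  mem_moveTo.2 (.inr (.inr ⟨S, hS, (ne_of_mem_erase hT).symm, rfl⟩))

theorem pmerge_moveTo (hQ : IsPartition Q) (hS : S ∈ Q) (hi : i ∈ S) (hT : T ∈ Q.erase S) :
    pmerge (moveTo Q i T) S = Q := by
  obtain ⟨hTS, hTQ⟩ := mem_erase.1 hT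
  refine (isPartition_pmerge (isPartition_moveTo hQ hTQ) S).eq_of_subset hQ fun A hA => ?_
  obtain rfl | ⟨B', hB', rfl⟩ := mem_pmerge.1 hA
  · exact hS
  obtain rfl | rfl | ⟨B, hB, -, rfl⟩ := mem_moveTo.1 hB'
  · rwa [insert_sdiff_of_mem _ hi, sdiff_eq_self_of_disjoint (hQ.disjoint hTQ hS hTS)]
  · rw [empty_sdiff]; exact hQ.1
  · by_cases hBS : B = S
    · rw [hBS, sdiff_eq_empty_iff_subset.2 (erase_subset i S)]; exact hQ.1
    · have hdisj := hQ.disjoint hB hS hBS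
      rwa [erase_eq_of_notMem (hdisj.notMem_of_mem_right_finset hi),
        sdiff_eq_self_of_disjoint hdisj]

theorem moveTo_injOn (hQ : IsPartition Q) (hS : S ∈ Q) (hi : i ∈ S) :
    Set.InjOn (moveTo Q i) (Q.erase S) := by
  intro T₁ hT₁ T₂ hT₂ h
  have hiT {T} (hT : T ∈ Q.erase S) : i ∉ T :=
    (hQ.disjoint (mem_of_mem_erase hT) hS (ne_of_mem_erase hT)).notMem_of_mem_right_finset hi
  have hQ' := isPartition_moveTo (i := i) hQ (mem_of_mem_erase hT₁)
  have hins : insert i T₁ = insert i T₂ :=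
    hQ'.eq_of_mem (mem_moveTo.2 (.inl rfl)) (h ▸ mem_moveTo.2 (.inl rfl))
      (mem_insert_self i T₁) (mem_insert_self i T₂)
  rw [← erase_insert (hiT hT₁), hins, erase_insert (hiT hT₂)]

theorem exists_moveTo_pmerge_eq (hQ' : IsPartition Q') (hi : i ∈ S) (hS' : S.erase i ∈ Q') :
    ∃ T ∈ (pmerge Q' S).erase S, moveTo (pmerge Q' S) i T = Q' := by
  obtain ⟨B, hB, hiB⟩ := hQ'.exists_mem i
  have hBS' : B ≠ S.erase i := fun h => notMem_erase i S (h ▸ hiB)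
  have hBS : B \ S = B.erase i := by
    ext a
    have := (hQ'.disjoint hB hS' hBS').notMem_of_mem_left_finset (a := a)
    by_cases hai : a = i <;> simp_all
  have hT : B.erase i ∈ pmerge Q' S := mem_pmerge.2 (.inr ⟨B, hB, hBS⟩)
  have hTS : B.erase i ≠ S := fun h => notMem_erase i B (h ▸ hi)
  refine ⟨B.erase i, mem_erase.2 ⟨hTS, hT⟩,
    (isPartition_moveTo (isPartition_pmerge hQ' S) hT).eq_of_subset hQ' fun A hA => ?_⟩
  obtain rfl | rfl | ⟨C, hC, hCT, rfl⟩ := mem_moveTo.1 hA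
  · rwa [insert_erase hiB]
  · exact hQ'.1
  obtain rfl | ⟨D, hD, rfl⟩ := mem_pmerge.1 hC
  · exact hS'
  by_cases hDS' : D = S.erase i
  · rw [hDS', sdiff_eq_empty_iff_subset.2 (erase_subset i S), erase_empty]; exact hQ'.1
  have hiD : i ∉ D := fun hiD => hCT (by rw [hQ'.eq_of_mem hD hB hiD hiB, hBS])
  have hDS : Disjoint D S := by
    simpa [erase_eq_of_notMem hiD] using disjoint_erase_comm.2 (hQ'.disjoint hD hS' hDS')
  rwa [sdiff_eq_self_of_disjoint hDS, erase_eq_of_notMem hiD]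

theorem sum_filter_mem_erase {M : Type*} [AddCommMonoid M] (hi : i ∈ S)
    (f : Finset (Finset (Fin n)) → M) :
    ∑ Q ∈ (allPartitions n).filter (S.erase i ∈ ·), f Q =
      ∑ Q ∈ (allPartitions n).filter (S ∈ ·), ∑ T ∈ Q.erase S, f (moveTo Q i T) := by
  simp only [allPartitions, filter_filter]
  rw [sum_sigma']
  refine (sum_bij (fun p _ => moveTo p.1 i p.2) ?_ ?_ ?_ fun _ _ => rfl).symm
  · rintro ⟨Q, T⟩ hp
    simp only [mem_sigma, mem_filter, mem_univ, true_and] at hp ⊢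
    exact ⟨isPartition_moveTo hp.1.1 (mem_of_mem_erase hp.2), erase_mem_moveTo hp.1.2 hp.2⟩
  · rintro ⟨Q₁, T₁⟩ h₁ ⟨Q₂, T₂⟩ h₂ h
    simp only [mem_sigma, mem_filter, mem_univ, true_and] at h₁ h₂
    obtain rfl : Q₁ = Q₂ := by
      rw [← pmerge_moveTo h₁.1.1 h₁.1.2 hi h₁.2, h, pmerge_moveTo h₂.1.1 h₂.1.2 hi h₂.2]
    rw [moveTo_injOn h₁.1.1 h₁.1.2 hi h₁.2 h₂.2 h]
  · intro Q' hQ'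
    simp only [mem_filter, mem_univ, true_and] at hQ'
    obtain ⟨T, hT, hQT⟩ := exists_moveTo_pmerge_eq hQ'.1 hi hQ'.2
    refine ⟨⟨pmerge Q' S, T⟩, ?_, hQT⟩
    simp only [mem_sigma, mem_filter, mem_univ, true_and]
    exact ⟨⟨isPartition_pmerge hQ'.1 S, mem_pmerge.2 (.inl rfl)⟩, hT⟩

end Partitions

section Order

variable {n : ℕ} (π : Equiv.Perm (Fin n))

def playersFrom (m : ℕ) : Finset (Fin n) :=
  univ.filter fun j => m ≤ (π.symm j : ℕ)

theorem playersFrom_zero : playersFrom π 0 = univ := by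
  simp [playersFrom]

theorem playersFrom_self : playersFrom π n = ∅ := by
  simp [playersFrom, filter_eq_empty_iff, Fin.is_lt]

variable {π} {m : ℕ}

theorem apply_mem_playersFrom (hm : m < n) : π ⟨m, hm⟩ ∈ playersFrom π m := by
  simp [playersFrom]

theorem playersFrom_succ (hm : m < n) :
    playersFrom π (m + 1) = (playersFrom π m).erase (π ⟨m, hm⟩) := by
  ext j
  simp only [playersFrom, mem_filter, mem_erase, mem_univ, true_and, Ne, ← π.symm_apply_eq,
    Fin.ext_iff]
  omega

theorem Cafter_apply (hm : m < n) : Cafter π (π ⟨m, hm⟩) = playersFrom π (m + 1) := by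
  unfold Cafter playersFrom
  congr! 2 with j
  simp only [Equiv.symm_apply_apply, Fin.lt_def]
  omega

theorem playersFrom_subset_Cafter {j : Fin n} (hj : j ∉ playersFrom π m) :
    playersFrom π m ⊆ Cafter π j := by
  intro k hk
  simp only [playersFrom, Cafter, mem_filter, mem_univ, true_and, not_le, Fin.lt_def] at hj hk ⊢
  omega

end Order

theorem sum_prod_compl_playersFrom {n : ℕ} {w : Weights n} (hnorm : Normalized w)
    (π : Equiv.Perm (Fin n)) {m : ℕ} (hm : m ≤ n) :
    ∑ Q ∈ (allPartitions n).filter (playersFrom π m ∈ ·),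
      ∏ i ∈ (playersFrom π m)ᶜ, w i (Cafter π i) (pmerge Q (Cafter π i)) = 1 := by
  induction m with
  | zero =>
    have : (allPartitions n).filter (univ ∈ ·) = {grandPart n} := by
      ext Q
      simp only [allPartitions, filter_filter, mem_filter, mem_univ, true_and, mem_singleton]
      exact ⟨fun hQ => hQ.1.eq_grandPart hQ.2,
        fun h => h ▸ ⟨isPartition_grandPart, by simp [grandPart]⟩⟩
    simp [playersFrom_zero, this]
  | succ m ih =>
    have hm' : m < n := hm
    set S := playersFrom π m
    set i₀ := π ⟨m, hm'⟩
    have hi₀ : i₀ ∈ S := apply_mem_playersFrom hm'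
    rw [playersFrom_succ hm', sum_filter_mem_erase hi₀, compl_erase]
    refine (sum_congr rfl fun Q hQ => ?_).trans (ih hm'.le)
    simp only [allPartitions, filter_filter, mem_filter, mem_univ, true_and] at hQ
    obtain ⟨hQ, hSQ⟩ := hQ
    have hfactor : ∀ T ∈ Q.erase S,
        ∏ i ∈ insert i₀ Sᶜ, w i (Cafter π i) (pmerge (moveTo Q i₀ T) (Cafter π i)) =
          w i₀ (S.erase i₀) (moveTo Q i₀ T) *
            ∏ i ∈ Sᶜ, w i (Cafter π i) (pmerge Q (Cafter π i)) := by
      intro T hT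
      have hQT := isPartition_moveTo (i := i₀) hQ (mem_of_mem_erase hT)
      rw [prod_insert (notMem_compl.2 hi₀), Cafter_apply, playersFrom_succ hm',
        hQT.pmerge_eq_self (erase_mem_moveTo hSQ hT)]
      congr 1
      refine prod_congr rfl fun j hj => ?_
      rw [← pmerge_pmerge hQT.1 (playersFrom_subset_Cafter (mem_compl.1 hj)),
        pmerge_moveTo hQ hSQ hi₀ hT]
    rw [sum_congr rfl hfactor, ← sum_mul, hnorm i₀ S Q hQ hSQ hi₀, one_mul]

theorem stmt3_general (n : ℕ) (w : Weights n) (hnorm : Normalized w)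
    (π : Equiv.Perm (Fin n)) :
    ∑ P ∈ allPartitions n, pr w π P = 1 := by
  have h := sum_prod_compl_playersFrom hnorm π le_rfl
  rwa [playersFrom_self, compl_empty, filter_true_of_mem fun Q hQ => (mem_filter.1 hQ).2.1] at h

/-- For any normalized weight system `α` and any permutation `π`, the numbers
`pr^α_π(P)` form a probability distribution over the partitions of `N`. -/
theorem stmt3 (n : ℕ) (w : Weights n) (hr : InRange w) (hnorm : Normalized w)
    (π : Equiv.Perm (Fin n)) :
    ∑ P ∈ allPartitions n, pr w π P = 1 :=
  stmt3_general n w hnorm π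
end

section
/- The extended Shapley value can be rewritten as a sum over embedded coalitions: φ^α_i(v) = Σ_{(S,P)∈EC, i∈S} [(|S|−1)!/|N|!] · Σ_{π∈Ω(N\S)} pr^α_π(S,P) · [mc^α_i(v)](S,P), where pr^α_π(S,P) = Π_{j∈N\S} α_j(C_j^π, P_{[C_j^π]}). -/
open Finset

open scoped Classical

/-- `C_j^π` for an ordering `π` of the players outside `S` (the players of `S`
leave last, so they appear after every player of `N \ S`). -/
def CafterOut {n : ℕ} (S : Finset (Fin n)) (π : Equiv.Perm {j : Fin n // j ∉ S})
    (j : {j : Fin n // j ∉ S}) : Finset (Fin n) :=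
  S ∪ (Finset.univ.filter fun k : Fin n => ∃ h : k ∉ S, π.symm j < π.symm ⟨k, h⟩)

/-- `pr^α_π(S, P) = ∏_{j ∈ N∖S} α_j(C_j^π, P_{[C_j^π]})` for an ordering `π`
of `N ∖ S`. -/
noncomputable def prOut {n : ℕ} (w : Weights n) (S : Finset (Fin n))
    (P : Finset (Finset (Fin n))) (π : Equiv.Perm {j : Fin n // j ∉ S}) : ℝ :=
  ∏ j : {j : Fin n // j ∉ S}, w j.1 (CafterOut S π j) (pmerge P (CafterOut S π j))

section Aux
variable {n : ℕ}

lemma mem_allPartitions {P : Finset (Finset (Fin n))} :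
    P ∈ allPartitions n ↔ IsPartition P := by
  simp [allPartitions]

/-- distinct blocks of a partition are "disjoint": unique block of an element -/
lemma IsPartition.block_eq {P : Finset (Finset (Fin n))} (hP : IsPartition P)
    {X Y : Finset (Fin n)} {a : Fin n} (hX : X ∈ P) (haX : a ∈ X)
    (hY : Y ∈ P) (haY : a ∈ Y) : X = Y := by
  obtain ⟨B, _, hu⟩ := hP.2 a
  rw [hu X ⟨hX, haX⟩, hu Y ⟨hY, haY⟩]

lemma pmerge_isPartition {P : Finset (Finset (Fin n))} (hP : IsPartition P)
    (S : Finset (Fin n)) : IsPartition (pmerge P S) := by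
  constructor
  · exact Finset.mem_union_left _ (by simpa using Finset.mem_image_of_mem (· \ S) hP.1)
  · intro a
    by_cases ha : a ∈ S
    · refine ⟨S, ⟨Finset.mem_union_right _ (Finset.mem_singleton_self S), ha⟩, ?_⟩
      rintro X ⟨hX, haX⟩
      rcases Finset.mem_union.1 hX with hX | hX
      · obtain ⟨B, _, rfl⟩ := Finset.mem_image.1 hX
        exact absurd (Finset.mem_sdiff.1 haX).2 (not_not_intro ha)
      · exact Finset.mem_singleton.1 hX
    · obtain ⟨B, ⟨hB, haB⟩, hu⟩ := hP.2 a
      refine ⟨B \ S, ⟨Finset.mem_union_left _ (Finset.mem_image_of_mem _ hB),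
        Finset.mem_sdiff.2 ⟨haB, ha⟩⟩, ?_⟩
      rintro X ⟨hX, haX⟩
      rcases Finset.mem_union.1 hX with hX | hX
      · obtain ⟨B', hB', rfl⟩ := Finset.mem_image.1 hX
        rw [hu B' ⟨hB', (Finset.mem_sdiff.1 haX).1⟩]
      · exact absurd (Finset.mem_singleton.1 hX ▸ haX) ha

lemma self_mem_pmerge (P : Finset (Finset (Fin n))) (S : Finset (Fin n)) :
    S ∈ pmerge P S :=
  Finset.mem_union_right _ (Finset.mem_singleton_self S)

lemma pmerge_empty {P : Finset (Finset (Fin n))} (h : ∅ ∈ P) : pmerge P ∅ = P := by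
  ext X
  simp only [pmerge, Finset.mem_union, Finset.mem_image, Finset.mem_singleton]
  constructor
  · rintro (⟨B, hB, rfl⟩ | rfl) <;> simpa
  · intro hX; exact Or.inl ⟨X, hX, by simp⟩

lemma pmerge_pmerge_s8 {P : Finset (Finset (Fin n))} (h : ∅ ∈ P)
    {A B : Finset (Fin n)} (hAB : A ⊆ B) : pmerge (pmerge P A) B = pmerge P B := by
  ext X
  simp only [pmerge, Finset.mem_union, Finset.mem_image, Finset.mem_singleton]
  constructor
  · rintro (⟨Y, hY, rfl⟩ | rfl)
    · rcases hY with ⟨Z, hZ, rfl⟩ | rfl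
      · refine Or.inl ⟨Z, hZ, ?_⟩
        rw [sdiff_sdiff_left, sup_eq_right.2 hAB]
      · exact Or.inl ⟨∅, h, by simp [Finset.sdiff_eq_empty_iff_subset.2 hAB]⟩
    · exact Or.inr rfl
  · rintro (⟨Z, hZ, rfl⟩ | rfl)
    · refine Or.inl ⟨Z \ A, Or.inl ⟨Z, hZ, rfl⟩, ?_⟩
      rw [sdiff_sdiff_left, sup_eq_right.2 hAB]
    · exact Or.inr rfl

end Aux
section Aux2
variable {n : ℕ}

lemma empty_mem_moveTo (P : Finset (Finset (Fin n))) (j : Fin n) (T : Finset (Fin n)) :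
    ∅ ∈ moveTo P j T := by
  simp [moveTo]

lemma insert_mem_moveTo (P : Finset (Finset (Fin n))) (j : Fin n) (T : Finset (Fin n)) :
    insert j T ∈ moveTo P j T := by
  simp [moveTo]

/-- the unique element of `moveTo P j T` containing `j` is `insert j T`. -/
lemma mem_moveTo_of_mem_j {P : Finset (Finset (Fin n))} {j : Fin n} {T X : Finset (Fin n)}
    (hX : X ∈ moveTo P j T) (hj : j ∈ X) : X = insert j T := by
  simp only [moveTo, Finset.mem_union, Finset.mem_image, Finset.mem_singleton] at hX
  rcases hX with (⟨B, _, rfl⟩ | rfl) | rfl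
  · exact absurd hj (Finset.notMem_erase _ _)
  · rfl
  · exact absurd hj (Finset.notMem_empty _)

lemma moveTo_right_injective {P : Finset (Finset (Fin n))} {j : Fin n}
    {T₁ T₂ : Finset (Fin n)} (h1 : j ∉ T₁) (h2 : j ∉ T₂)
    (h : moveTo P j T₁ = moveTo P j T₂) : T₁ = T₂ := by
  have : insert j T₁ = insert j T₂ :=
    mem_moveTo_of_mem_j (h ▸ insert_mem_moveTo P j T₁) (Finset.mem_insert_self _ _)
  have := congrArg (Finset.erase · j) this
  simpa [Finset.erase_insert h1, Finset.erase_insert h2] using this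

lemma moveTo_isPartition {R : Finset (Finset (Fin n))} (hR : IsPartition R)
    {j : Fin n} {T : Finset (Fin n)} (hT : T ∈ R) (hjT : j ∉ T) :
    IsPartition (moveTo R j T) := by
  constructor
  · exact empty_mem_moveTo R j T
  intro a
  by_cases haj : a = j
  · subst haj
    exact ⟨insert a T, ⟨insert_mem_moveTo R a T, Finset.mem_insert_self _ _⟩,
      fun X ⟨hX, haX⟩ => mem_moveTo_of_mem_j hX haX⟩
  by_cases haT : a ∈ T
  · refine ⟨insert j T, ⟨insert_mem_moveTo R j T, Finset.mem_insert_of_mem haT⟩, ?_⟩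
    rintro X ⟨hX, haX⟩
    simp only [moveTo, Finset.mem_union, Finset.mem_image, Finset.mem_singleton] at hX
    rcases hX with (⟨B, hB, rfl⟩ | rfl) | rfl
    · have hBmem := Finset.mem_of_mem_erase hB
      have hBne := Finset.ne_of_mem_erase hB
      have haB : a ∈ B := Finset.mem_of_mem_erase haX
      exact absurd (hR.block_eq hBmem haB hT haT) hBne
    · rfl
    · exact absurd haX (Finset.notMem_empty _)
  · obtain ⟨B, ⟨hB, haB⟩, _⟩ := hR.2 a
    have hBT : B ≠ T := fun h => haT (h ▸ haB)
    refine ⟨B.erase j, ⟨?_, Finset.mem_erase.2 ⟨haj, haB⟩⟩, ?_⟩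
    · exact Finset.mem_union_left _ (Finset.mem_union_left _
        (Finset.mem_image_of_mem _ (Finset.mem_erase.2 ⟨hBT, hB⟩)))
    rintro X ⟨hX, haX⟩
    simp only [moveTo, Finset.mem_union, Finset.mem_image, Finset.mem_singleton] at hX
    rcases hX with (⟨B', hB', rfl⟩ | rfl) | rfl
    · have : B' = B := hR.block_eq (Finset.mem_of_mem_erase hB')
        (Finset.mem_of_mem_erase haX) hB haB
      rw [this]
    · rcases Finset.mem_insert.1 haX with h | h
      · exact absurd h haj
      · exact absurd h haT
    · exact absurd haX (Finset.notMem_empty _)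

/-- merging back: pmerge (moveTo R j T) D = R -/
lemma pmerge_moveTo_s8 {R : Finset (Finset (Fin n))} (hR : IsPartition R)
    {D T : Finset (Fin n)} {j : Fin n} (hD : D ∈ R) (hj : j ∈ D)
    (hT : T ∈ R.erase D) : pmerge (moveTo R j T) D = R := by
  obtain ⟨hTD, hTR⟩ := Finset.mem_erase.1 hT
  -- blocks of R other than D are disjoint from D
  have hdisj : ∀ Y ∈ R, Y ≠ D → Y \ D = Y := by
    intro Y hY hYD
    rw [Finset.sdiff_eq_self_iff_disjoint, Finset.disjoint_left]
    intro a haY haD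
    exact hYD (hR.block_eq hY haY hD haD)
  have hTdisj : T \ D = T := hdisj T hTR hTD
  have hjT : j ∉ T := fun hjT => hTD (hR.block_eq hTR hjT hD hj)
  ext X
  simp only [pmerge, moveTo, Finset.mem_union, Finset.mem_image, Finset.mem_singleton]
  constructor
  · rintro (⟨Y, hY, rfl⟩ | rfl)
    · rcases hY with (⟨Z, hZ, rfl⟩ | rfl) | rfl
      · obtain ⟨hZT, hZR⟩ := Finset.mem_erase.1 hZ
        by_cases hZD : Z = D
        · have : Z.erase j \ D = ∅ := by
            rw [hZD]
            exact Finset.sdiff_eq_empty_iff_subset.2 (Finset.erase_subset _ _)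
          rw [this]; exact hR.1
        · have hjZ : j ∉ Z := fun hjZ => hZD (hR.block_eq hZR hjZ hD hj)
          rw [Finset.erase_eq_of_notMem hjZ, hdisj Z hZR hZD]
          exact hZR
      · -- (insert j T) \ D = T
        have : insert j T \ D = T := by
          rw [Finset.insert_sdiff_of_mem _ hj, hTdisj]
        rw [this]; exact hTR
      · simpa using hR.1
    · exact hD
  · intro hXR
    by_cases hXD : X = D
    · exact Or.inr hXD
    by_cases hXT : X = T
    · subst hXT
      refine Or.inl ⟨insert j X, Or.inl (Or.inr rfl), ?_⟩
      rw [Finset.insert_sdiff_of_mem _ hj, hTdisj]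
    · refine Or.inl ⟨X.erase j, Or.inl (Or.inl ⟨X, Finset.mem_erase.2 ⟨hXT, hXR⟩, rfl⟩), ?_⟩
      have hjX : j ∉ X := fun hjX => hXD (hR.block_eq hXR hjX hD hj)
      rw [Finset.erase_eq_of_notMem hjX, hdisj X hXR hXD]

end Aux2
section Aux3
variable {n : ℕ}

lemma sdiff_erase_of_mem {j₀ : Fin n} {B D : Finset (Fin n)} (hj₀B : j₀ ∈ B) (hj₀D : j₀ ∈ D) :
    B \ (D.erase j₀) = insert j₀ (B \ D) := by
  ext a
  by_cases ha : a = j₀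
  · subst ha; simp [hj₀B]
  · simp [Finset.mem_erase, ha]

lemma sdiff_erase_of_notMem {j₀ : Fin n} {B D : Finset (Fin n)} (hj₀B : j₀ ∉ B) :
    B \ (D.erase j₀) = B \ D := by
  ext a
  by_cases ha : a = j₀
  · subst ha; simp [hj₀B]
  · simp [Finset.mem_erase, ha]

lemma fiber_iff {P R : Finset (Finset (Fin n))} (hP : IsPartition P) (hR : IsPartition R)
    {D : Finset (Fin n)} (hD : D ∈ R) {j₀ : Fin n} (hj₀ : j₀ ∈ D) :
    pmerge P D = R ↔ ∃ T ∈ R.erase D, pmerge P (D.erase j₀) = moveTo R j₀ T := by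
  constructor
  · intro hPD
    obtain ⟨B, ⟨hB, hj₀B⟩, hu⟩ := hP.2 j₀
    refine ⟨B \ D, ?_, ?_⟩
    · refine Finset.mem_erase.2 ⟨?_, ?_⟩
      · intro h
        exact (Finset.mem_sdiff.1 (by rw [h]; exact hj₀)).2 hj₀
      · rw [← hPD]
        exact Finset.mem_union_left _ (Finset.mem_image_of_mem _ hB)
    · have hTD : B \ D ≠ D := fun h =>
        (Finset.mem_sdiff.1 (by rw [h]; exact hj₀)).2 hj₀
      ext X
      simp only [pmerge, moveTo, Finset.mem_union, Finset.mem_image, Finset.mem_singleton]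
      constructor
      · rintro (⟨B', hB', rfl⟩ | rfl)
        · by_cases hj₀B' : j₀ ∈ B'
          · have : B' = B := hu B' ⟨hB', hj₀B'⟩
            subst this
            exact Or.inl (Or.inr (sdiff_erase_of_mem hj₀B' hj₀))
          · rw [sdiff_erase_of_notMem hj₀B']
            by_cases hBT : B' \ D = B \ D
            · rcases Finset.eq_empty_or_nonempty (B' \ D) with he | ⟨a, ha⟩
              · exact Or.inr he
              · obtain ⟨haB', haD⟩ := Finset.mem_sdiff.1 ha
                have haB : a ∈ B := (Finset.mem_sdiff.1 (hBT ▸ ha)).1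
                exact absurd (hP.block_eq hB' haB' hB haB ▸ hj₀B) hj₀B'
            · refine Or.inl (Or.inl ⟨B' \ D, Finset.mem_erase.2 ⟨hBT, ?_⟩, ?_⟩)
              · rw [← hPD]
                exact Finset.mem_union_left _ (Finset.mem_image_of_mem _ hB')
              · rw [Finset.erase_eq_of_notMem (fun h => hj₀B' (Finset.mem_sdiff.1 h).1)]
        · refine Or.inl (Or.inl ⟨D, Finset.mem_erase.2 ⟨fun h => hTD h.symm, hD⟩, rfl⟩)
      · rintro ((⟨Y, hY, rfl⟩ | rfl) | rfl)
        · obtain ⟨hYT, hYR⟩ := Finset.mem_erase.1 hY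
          rw [← hPD] at hYR
          rcases Finset.mem_union.1 hYR with hY' | hY'
          · obtain ⟨Z, hZ, rfl⟩ := Finset.mem_image.1 hY'
            by_cases hj₀Z : j₀ ∈ Z
            · exact absurd (congrArg (· \ D) (hu Z ⟨hZ, hj₀Z⟩)) hYT
            · refine Or.inl ⟨Z, hZ, ?_⟩
              rw [sdiff_erase_of_notMem hj₀Z,
                Finset.erase_eq_of_notMem (fun h => hj₀Z (Finset.mem_sdiff.1 h).1)]
          · rw [Finset.mem_singleton.1 hY']
            exact Or.inr rfl
        · exact Or.inl ⟨B, hB, sdiff_erase_of_mem hj₀B hj₀⟩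
        · exact Or.inl ⟨∅, hP.1, by simp⟩
  · rintro ⟨T, hT, hPT⟩
    have h1 : pmerge P D = pmerge (pmerge P (D.erase j₀)) D :=
      (pmerge_pmerge_s8 hP.1 (Finset.erase_subset _ _)).symm
    rw [h1, hPT]
    exact pmerge_moveTo_s8 hR hD hj₀ hT

end Aux3
section Aux4
variable {n : ℕ}

lemma telescope {w : Weights n} (hnorm : Normalized w) (f : Fin n → Fin n)
    (hf : Function.Injective f) (D : Finset (Fin n)) :
    ∀ R : Finset (Finset (Fin n)), IsPartition R → D ∈ R →
      ∑ P ∈ (allPartitions n).filter (fun P => pmerge P D = R),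
        ∏ j ∈ D, w j (D.filter fun k => f j < f k)
          (pmerge P (D.filter fun k => f j < f k)) = 1 := by
  induction D using Finset.strongInduction with
  | _ D ih =>
  intro R hR hD
  rcases D.eq_empty_or_nonempty with rfl | hne
  · have hfil : (allPartitions n).filter (fun P => pmerge P ∅ = R) = {R} := by
      ext P
      simp only [Finset.mem_filter, Finset.mem_singleton, mem_allPartitions]
      constructor
      · rintro ⟨hP, hPD⟩; rw [← hPD, pmerge_empty hP.1]
      · rintro rfl; exact ⟨hR, pmerge_empty hR.1⟩
    rw [hfil, Finset.sum_singleton, Finset.prod_empty]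
  · obtain ⟨j₀, hj₀, hmin⟩ := Finset.exists_min_image D f hne
    have hD' : D.filter (fun k => f j₀ < f k) = D.erase j₀ := by
      ext k
      simp only [Finset.mem_filter, Finset.mem_erase]
      constructor
      · rintro ⟨hk, hlt⟩
        exact ⟨fun h => absurd (h ▸ hlt) (lt_irrefl _), hk⟩
      · rintro ⟨hkj, hk⟩
        exact ⟨hk, lt_of_le_of_ne (hmin k hk) (fun h => hkj (hf h).symm)⟩
    have hfj : ∀ j ∈ D.erase j₀, D.filter (fun k => f j < f k)
        = (D.erase j₀).filter (fun k => f j < f k) := by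
      intro j hj
      obtain ⟨hjj₀, hjD⟩ := Finset.mem_erase.1 hj
      ext k
      simp only [Finset.mem_filter, Finset.mem_erase]
      constructor
      · rintro ⟨hk, hlt⟩
        refine ⟨⟨fun h => ?_, hk⟩, hlt⟩
        subst h
        exact absurd (lt_of_le_of_lt (hmin j hjD) hlt) (lt_irrefl _)
      · rintro ⟨⟨_, hk⟩, hlt⟩
        exact ⟨hk, hlt⟩
    have hj₀T : ∀ T ∈ R.erase D, j₀ ∉ T := by
      intro T hT hj₀'
      obtain ⟨hTD, hTR⟩ := Finset.mem_erase.1 hT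
      exact hTD (hR.block_eq hTR hj₀' hD hj₀)
    have hsplit : (allPartitions n).filter (fun P => pmerge P D = R)
        = (R.erase D).biUnion (fun T => (allPartitions n).filter
            (fun P => pmerge P (D.erase j₀) = moveTo R j₀ T)) := by
      ext P
      simp only [Finset.mem_filter, Finset.mem_biUnion, mem_allPartitions]
      constructor
      · rintro ⟨hP, hPD⟩
        obtain ⟨T, hT, hPT⟩ := (fiber_iff hP hR hD hj₀).1 hPD
        exact ⟨T, hT, hP, hPT⟩
      · rintro ⟨T, hT, hP, hPT⟩
        exact ⟨hP, (fiber_iff hP hR hD hj₀).2 ⟨T, hT, hPT⟩⟩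
    have hdisj : (↑(R.erase D) : Set (Finset (Fin n))).PairwiseDisjoint
        (fun T => (allPartitions n).filter
          (fun P => pmerge P (D.erase j₀) = moveTo R j₀ T)) := by
      intro T₁ h1 T₂ h2 hne12
      simp only [Finset.coe_mem, Finset.mem_coe] at h1 h2
      refine Finset.disjoint_left.2 ?_
      intro P hP1 hP2
      obtain ⟨_, e1⟩ := Finset.mem_filter.1 hP1
      obtain ⟨_, e2⟩ := Finset.mem_filter.1 hP2
      exact hne12 (moveTo_right_injective (hj₀T T₁ h1) (hj₀T T₂ h2) (e1 ▸ e2))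
    rw [hsplit, Finset.sum_biUnion hdisj]
    have hinner : ∀ T ∈ R.erase D,
        (∑ P ∈ (allPartitions n).filter
            (fun P => pmerge P (D.erase j₀) = moveTo R j₀ T),
          ∏ j ∈ D, w j (D.filter fun k => f j < f k)
            (pmerge P (D.filter fun k => f j < f k)))
        = w j₀ (D.erase j₀) (moveTo R j₀ T) := by
      intro T hT
      obtain ⟨hTD, hTR⟩ := Finset.mem_erase.1 hT
      have hRT : IsPartition (moveTo R j₀ T) := moveTo_isPartition hR hTR (hj₀T T hT)
      have hDmem : D.erase j₀ ∈ moveTo R j₀ T := by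
        refine Finset.mem_union_left _ (Finset.mem_union_left _
          (Finset.mem_image_of_mem _ ?_))
        exact Finset.mem_erase.2 ⟨Ne.symm hTD, hD⟩
      have step : ∀ P ∈ (allPartitions n).filter
          (fun P => pmerge P (D.erase j₀) = moveTo R j₀ T),
          (∏ j ∈ D, w j (D.filter fun k => f j < f k)
            (pmerge P (D.filter fun k => f j < f k)))
          = w j₀ (D.erase j₀) (moveTo R j₀ T) *
            ∏ j ∈ D.erase j₀, w j ((D.erase j₀).filter fun k => f j < f k)
              (pmerge P ((D.erase j₀).filter fun k => f j < f k)) := by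
        intro P hP
        obtain ⟨hPp, hPT⟩ := Finset.mem_filter.1 hP
        rw [← Finset.mul_prod_erase D _ hj₀, hD', hPT]
        congr 1
        refine Finset.prod_congr rfl ?_
        intro j hj
        rw [hfj j hj]
      rw [Finset.sum_congr rfl step, ← Finset.mul_sum,
        ih (D.erase j₀) (Finset.erase_ssubset hj₀) (moveTo R j₀ T) hRT hDmem, mul_one]
    rw [Finset.sum_congr rfl hinner]
    exact hnorm j₀ D R hR hD hj₀

end Aux4
section Aux5
variable {n : ℕ}

noncomputable def blockOf (R : Finset (Finset (Fin n))) (a : Fin n) : Finset (Fin n) :=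
  if h : IsPartition R then (h.2 a).exists.choose else ∅

lemma blockOf_spec {R : Finset (Finset (Fin n))} (h : IsPartition R) (a : Fin n) :
    blockOf R a ∈ R ∧ a ∈ blockOf R a := by
  rw [blockOf, dif_pos h]
  exact (h.2 a).exists.choose_spec

lemma blockOf_eq {R : Finset (Finset (Fin n))} (h : IsPartition R) {a : Fin n}
    {X : Finset (Fin n)} (hX : X ∈ R) (haX : a ∈ X) : blockOf R a = X :=
  h.block_eq (blockOf_spec h a).1 (blockOf_spec h a).2 hX haX

/-- the blocks of a partition other than the block of `a` do not contain `a` -/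
lemma notMem_of_ne_block {R : Finset (Finset (Fin n))} (h : IsPartition R) {a : Fin n}
    {X Y : Finset (Fin n)} (hX : X ∈ R) (haX : a ∈ X) (hY : Y ∈ R) (hne : Y ≠ X) :
    a ∉ Y := fun haY => hne (h.block_eq hY haY hX haX)

lemma reconstruct_mem {R : Finset (Finset (Fin n))} (hR : IsPartition R)
    {C : Finset (Fin n)} (hC : C ∈ R) {i : Fin n} (hiC : i ∉ C) :
    (blockOf R i).erase i ∈ (pmerge R (insert i C)).erase (insert i C) := by
  obtain ⟨hBR, hiB⟩ := blockOf_spec hR i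
  have hBS : blockOf R i \ (insert i C) = (blockOf R i).erase i := by
    ext a
    simp only [Finset.mem_sdiff, Finset.mem_insert, Finset.mem_erase, not_or]
    constructor
    · rintro ⟨haB, hai, _⟩; exact ⟨hai, haB⟩
    · rintro ⟨hai, haB⟩
      refine ⟨haB, hai, fun haC => ?_⟩
      exact hiC ((hR.block_eq hBR haB hC haC) ▸ hiB)
  refine Finset.mem_erase.2 ⟨?_, ?_⟩
  · intro h
    have : i ∈ (blockOf R i).erase i := h ▸ Finset.mem_insert_self i C
    exact (Finset.notMem_erase i _) this
  · rw [← hBS]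
    exact Finset.mem_union_left _ (Finset.mem_image_of_mem _ hBR)

lemma reconstruct_moveTo {R : Finset (Finset (Fin n))} (hR : IsPartition R)
    {C : Finset (Fin n)} (hC : C ∈ R) {i : Fin n} (hiC : i ∉ C) :
    moveTo (pmerge R (insert i C)) i ((blockOf R i).erase i) = R := by
  obtain ⟨hBR, hiB⟩ := blockOf_spec hR i
  set B := blockOf R i with hBdef
  set S := insert i C with hSdef
  have hiS : i ∈ S := Finset.mem_insert_self i C
  have hBS : B \ S = B.erase i := by
    ext a
    simp only [Finset.mem_sdiff, Finset.mem_insert, Finset.mem_erase, not_or, hSdef]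
    constructor
    · rintro ⟨haB, hai, _⟩; exact ⟨hai, haB⟩
    · rintro ⟨hai, haB⟩
      refine ⟨haB, hai, fun haC => ?_⟩
      exact hiC ((hR.block_eq hBR haB hC haC) ▸ hiB)
  -- disjointness of other blocks from S
  have hYS : ∀ Y ∈ R, Y ≠ B → Y ≠ C → Y \ S = Y := by
    intro Y hY hYB hYC
    rw [Finset.sdiff_eq_self_iff_disjoint, Finset.disjoint_left]
    intro a haY haS
    rcases Finset.mem_insert.1 haS with rfl | haC
    · exact hYB (hR.block_eq hY haY hBR hiB)
    · exact hYC (hR.block_eq hY haY hC haC)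
  ext X
  constructor
  · intro hX
    simp only [moveTo, Finset.mem_union, Finset.mem_image, Finset.mem_singleton] at hX
    rcases hX with (⟨Z, hZ, rfl⟩ | rfl) | rfl
    · obtain ⟨hZT, hZQ⟩ := Finset.mem_erase.1 hZ
      simp only [pmerge, Finset.mem_union, Finset.mem_image, Finset.mem_singleton] at hZQ
      rcases hZQ with ⟨Y, hY, rfl⟩ | rfl
      · by_cases hiY : i ∈ Y
        · exact absurd (congrArg (· \ S) (hR.block_eq hY hiY hBR hiB) |>.trans hBS) hZT
        · have hi' : i ∉ Y \ S := fun h => hiY (Finset.mem_sdiff.1 h).1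
          rw [Finset.erase_eq_of_notMem hi']
          by_cases hYB : Y = B
          · exact absurd (by rw [hYB]; exact hiB) hiY
          · by_cases hYC : Y = C
            · rw [hYC]
              have : C \ S = ∅ := Finset.sdiff_eq_empty_iff_subset.2
                (Finset.subset_insert _ _)
              rw [this]; exact hR.1
            · rw [hYS Y hY hYB hYC]; exact hY
      · rw [hSdef, Finset.erase_insert hiC]; exact hC
    · rw [Finset.insert_erase hiB]
      exact hBR
    · exact hR.1
  · intro hX
    by_cases hXB : X = B
    · have hX' : X = insert i ((blockOf R i).erase i) := by
        rw [hXB]; exact (Finset.insert_erase hiB).symm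
      rw [hX']
      exact insert_mem_moveTo _ _ _
    · have hiX : i ∉ X := notMem_of_ne_block hR hBR hiB hX hXB
      by_cases hXC : X = C
      · subst hXC
        refine Finset.mem_union_left _ (Finset.mem_union_left _ (Finset.mem_image.2
          ⟨S, Finset.mem_erase.2 ⟨?_, self_mem_pmerge _ _⟩, by rw [hSdef, Finset.erase_insert hiC]⟩))
        intro h
        exact (Finset.notMem_erase i B) (h ▸ hiS)
      · have hXS : X \ S = X := hYS X hX hXB hXC
        rcases Finset.eq_empty_or_nonempty X with rfl | ⟨a, ha⟩
        · exact Finset.mem_union_right _ (Finset.mem_singleton_self _)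
        · have hXT : X ≠ B.erase i := by
            intro h
            have haB : a ∈ B := Finset.mem_of_mem_erase (h ▸ ha)
            exact hXB (hR.block_eq hX ha hBR haB)
          refine Finset.mem_union_left _ (Finset.mem_union_left _ (Finset.mem_image.2
            ⟨X, Finset.mem_erase.2 ⟨hXT, ?_⟩, Finset.erase_eq_of_notMem hiX⟩))
          rw [← hXS]
          exact Finset.mem_union_left _ (Finset.mem_image_of_mem _ hX)

end Aux5
section Aux6
variable {n : ℕ}

lemma notMem_Cafter_self (π : Equiv.Perm (Fin n)) (i : Fin n) : i ∉ Cafter π i := by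
  simp [Cafter]

lemma Cafter_of_mem {π : Equiv.Perm (Fin n)} {i j : Fin n} (hj : j ∈ Cafter π i) :
    Cafter π j = (Cafter π i).filter (fun k => π.symm j < π.symm k) := by
  rw [Cafter, Finset.mem_filter] at hj
  ext k
  simp only [Cafter, Finset.mem_filter, Finset.mem_univ, true_and]
  exact ⟨fun h => ⟨lt_trans hj.2 h, h⟩, fun h => h.2⟩

lemma insert_Cafter_subset {π : Equiv.Perm (Fin n)} {i j : Fin n}
    (hj : j ∉ insert i (Cafter π i)) : insert i (Cafter π i) ⊆ Cafter π j := by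
  simp only [Finset.mem_insert, Cafter, Finset.mem_filter, Finset.mem_univ, true_and,
    not_or, not_lt] at hj
  obtain ⟨hji, hle⟩ := hj
  have hlt : π.symm j < π.symm i :=
    lt_of_le_of_ne hle (fun h => hji (π.symm.injective h))
  intro k hk
  simp only [Cafter, Finset.mem_filter, Finset.mem_univ, true_and]
  rcases Finset.mem_insert.1 hk with rfl | hk'
  · exact hlt
  · exact lt_trans hlt (Finset.mem_filter.1 hk').2

lemma perPi {w : Weights n} (hnorm : Normalized w) (v : Game n) (i : Fin n)
    (π : Equiv.Perm (Fin n)) :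
    ∑ P ∈ allPartitions n, pr w π P *
      (v (insert i (Cafter π i)) (pmerge P (insert i (Cafter π i))) -
        v (Cafter π i) (pmerge P (Cafter π i)))
    = ∑ Q ∈ (allPartitions n).filter (fun Q => insert i (Cafter π i) ∈ Q),
        (∏ j ∈ Finset.univ.filter (fun j => j ∉ insert i (Cafter π i)),
          w j (Cafter π j) (pmerge Q (Cafter π j))) *
          mc w v i (insert i (Cafter π i)) Q := by
  have hiC : i ∉ Cafter π i := notMem_Cafter_self π i
  have hErase : (insert i (Cafter π i)).erase i = Cafter π i := Finset.erase_insert hiC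
  have hiS : i ∈ insert i (Cafter π i) := Finset.mem_insert_self _ _
  -- step A : group partitions P by R = pmerge P (Cafter π i)
  have hmaps : ∀ P ∈ allPartitions n,
      pmerge P (Cafter π i) ∈ (allPartitions n).filter (fun R => Cafter π i ∈ R) := by
    intro P hP
    exact Finset.mem_filter.2 ⟨mem_allPartitions.2
      (pmerge_isPartition (mem_allPartitions.1 hP) _), self_mem_pmerge _ _⟩
  rw [← Finset.sum_fiberwise_of_maps_to hmaps]
  -- step B : evaluate the inner sums via the telescope lemma
  have hinner : ∀ R ∈ (allPartitions n).filter (fun R => Cafter π i ∈ R),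
      (∑ P ∈ (allPartitions n).filter (fun P => pmerge P (Cafter π i) = R),
        pr w π P *
          (v (insert i (Cafter π i)) (pmerge P (insert i (Cafter π i))) -
            v (Cafter π i) (pmerge P (Cafter π i))))
      = (∏ j ∈ Finset.univ.filter (fun j => j ∉ insert i (Cafter π i)),
          w j (Cafter π j) (pmerge R (Cafter π j))) *
        (w i (Cafter π i) R *
          (v (insert i (Cafter π i)) (pmerge R (insert i (Cafter π i))) -
            v (Cafter π i) R)) := by
    intro R hR
    obtain ⟨hRp', hCR⟩ := Finset.mem_filter.1 hR
    have hRp : IsPartition R := mem_allPartitions.1 hRp'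
    have hstep : ∀ P ∈ (allPartitions n).filter (fun P => pmerge P (Cafter π i) = R),
        pr w π P *
          (v (insert i (Cafter π i)) (pmerge P (insert i (Cafter π i))) -
            v (Cafter π i) (pmerge P (Cafter π i)))
        = ((∏ j ∈ Finset.univ.filter (fun j => j ∉ insert i (Cafter π i)),
              w j (Cafter π j) (pmerge R (Cafter π j))) *
            (w i (Cafter π i) R *
              (v (insert i (Cafter π i)) (pmerge R (insert i (Cafter π i))) -
                v (Cafter π i) R))) *
          ∏ j ∈ Cafter π i,
            w j ((Cafter π i).filter fun k => π.symm j < π.symm k)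
              (pmerge P ((Cafter π i).filter fun k => π.symm j < π.symm k)) := by
      intro P hP
      obtain ⟨hPp', hPR⟩ := Finset.mem_filter.1 hP
      have hPp : IsPartition P := mem_allPartitions.1 hPp'
      have hPA : ∀ A : Finset (Fin n), Cafter π i ⊆ A → pmerge P A = pmerge R A := by
        intro A hA
        rw [← hPR, pmerge_pmerge_s8 hPp.1 hA]
      have hpr : pr w π P
          = ((∏ j ∈ Finset.univ.filter (fun j => j ∉ insert i (Cafter π i)),
                w j (Cafter π j) (pmerge R (Cafter π j))) *
              w i (Cafter π i) R) *
            ∏ j ∈ Cafter π i,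
              w j ((Cafter π i).filter fun k => π.symm j < π.symm k)
                (pmerge P ((Cafter π i).filter fun k => π.symm j < π.symm k)) := by
        rw [pr, ← Finset.prod_filter_mul_prod_filter_not Finset.univ
          (fun j => j ∈ insert i (Cafter π i))]
        rw [Finset.filter_univ_mem, Finset.prod_insert hiC]
        have e1 : ∏ j ∈ Finset.univ.filter (fun j => j ∉ insert i (Cafter π i)),
            w j (Cafter π j) (pmerge P (Cafter π j))
            = ∏ j ∈ Finset.univ.filter (fun j => j ∉ insert i (Cafter π i)),
              w j (Cafter π j) (pmerge R (Cafter π j)) := by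
          refine Finset.prod_congr rfl (fun j hj => ?_)
          have hjS := (Finset.mem_filter.1 hj).2
          rw [hPA _ (Finset.Subset.trans (Finset.subset_insert _ _)
            (insert_Cafter_subset hjS))]
        have e2 : ∏ j ∈ Cafter π i, w j (Cafter π j) (pmerge P (Cafter π j))
            = ∏ j ∈ Cafter π i,
              w j ((Cafter π i).filter fun k => π.symm j < π.symm k)
                (pmerge P ((Cafter π i).filter fun k => π.symm j < π.symm k)) := by
          refine Finset.prod_congr rfl (fun j hj => ?_)
          rw [Cafter_of_mem hj]
        rw [e1, e2, hPR]
        ring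
      rw [hpr, hPA _ (Finset.subset_insert _ _), hPR]
      ring
    rw [Finset.sum_congr rfl hstep, ← Finset.mul_sum,
      telescope hnorm (fun x => π.symm x) π.symm.injective (Cafter π i) R hRp hCR,
      mul_one]
  rw [Finset.sum_congr rfl hinner]
  -- step C : reindex R ↔ (Q, T)
  have hRHS : ∀ Q ∈ (allPartitions n).filter
      (fun Q => insert i (Cafter π i) ∈ Q),
      (∏ j ∈ Finset.univ.filter (fun j => j ∉ insert i (Cafter π i)),
          w j (Cafter π j) (pmerge Q (Cafter π j))) *
        mc w v i (insert i (Cafter π i)) Q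
      = ∑ T ∈ Q.erase (insert i (Cafter π i)),
          (∏ j ∈ Finset.univ.filter (fun j => j ∉ insert i (Cafter π i)),
            w j (Cafter π j) (pmerge Q (Cafter π j))) *
          (w i (Cafter π i) (moveTo Q i T) *
            (v (insert i (Cafter π i)) Q - v (Cafter π i) (moveTo Q i T))) := by
    intro Q hQ
    rw [mc, hErase, Finset.mul_sum]
  rw [Finset.sum_congr rfl hRHS]
  have hsig := Finset.sum_sigma
    ((allPartitions n).filter (fun Q => insert i (Cafter π i) ∈ Q))
    (fun Q => Q.erase (insert i (Cafter π i)))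
    (fun p => (∏ j ∈ Finset.univ.filter (fun j => j ∉ insert i (Cafter π i)),
        w j (Cafter π j) (pmerge p.1 (Cafter π j))) *
      (w i (Cafter π i) (moveTo p.1 i p.2) *
        (v (insert i (Cafter π i)) p.1 - v (Cafter π i) (moveTo p.1 i p.2))))
  rw [← hsig]
  refine Finset.sum_nbij'
    (fun R => ⟨pmerge R (insert i (Cafter π i)), (blockOf R i).erase i⟩)
    (fun p => moveTo p.1 i p.2) ?_ ?_ ?_ ?_ ?_
  · intro R hR
    obtain ⟨hRp', hCR⟩ := Finset.mem_filter.1 hR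
    have hRp : IsPartition R := mem_allPartitions.1 hRp'
    refine Finset.mem_sigma.2 ⟨Finset.mem_filter.2 ⟨mem_allPartitions.2
      (pmerge_isPartition hRp _), self_mem_pmerge _ _⟩, ?_⟩
    exact reconstruct_mem hRp hCR hiC
  · intro p hp
    obtain ⟨hQ', hT⟩ := Finset.mem_sigma.1 hp
    obtain ⟨hQp', hSQ⟩ := Finset.mem_filter.1 hQ'
    have hQp : IsPartition p.1 := mem_allPartitions.1 hQp'
    obtain ⟨hTS, hTQ⟩ := Finset.mem_erase.1 hT
    have hiT : i ∉ p.2 := notMem_of_ne_block hQp hSQ hiS hTQ hTS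
    refine Finset.mem_filter.2 ⟨mem_allPartitions.2
      (moveTo_isPartition hQp hTQ hiT), ?_⟩
    refine Finset.mem_union_left _ (Finset.mem_union_left _ (Finset.mem_image.2
      ⟨insert i (Cafter π i), Finset.mem_erase.2 ⟨fun h => hTS h.symm, hSQ⟩, hErase⟩))
  · intro R hR
    obtain ⟨hRp', hCR⟩ := Finset.mem_filter.1 hR
    exact reconstruct_moveTo (mem_allPartitions.1 hRp') hCR hiC
  · intro p hp
    obtain ⟨hQ', hT⟩ := Finset.mem_sigma.1 hp
    obtain ⟨hQp', hSQ⟩ := Finset.mem_filter.1 hQ'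
    have hQp : IsPartition p.1 := mem_allPartitions.1 hQp'
    obtain ⟨hTS, hTQ⟩ := Finset.mem_erase.1 hT
    have hiT : i ∉ p.2 := notMem_of_ne_block hQp hSQ hiS hTQ hTS
    have hmove : IsPartition (moveTo p.1 i p.2) := moveTo_isPartition hQp hTQ hiT
    have h1 : pmerge (moveTo p.1 i p.2) (insert i (Cafter π i)) = p.1 :=
      pmerge_moveTo_s8 hQp hSQ hiS hT
    have h2 : blockOf (moveTo p.1 i p.2) i = insert i p.2 :=
      mem_moveTo_of_mem_j (blockOf_spec hmove i).1 (blockOf_spec hmove i).2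
    obtain ⟨Q, T⟩ := p
    simp only at h1 h2 ⊢
    rw [h1, h2, Finset.erase_insert hiT]
  · intro R hR
    obtain ⟨hRp', hCR⟩ := Finset.mem_filter.1 hR
    have hRp : IsPartition R := mem_allPartitions.1 hRp'
    have hrec : moveTo (pmerge R (insert i (Cafter π i))) i ((blockOf R i).erase i) = R :=
      reconstruct_moveTo hRp hCR hiC
    simp only [hrec]
    congr 1
    refine Finset.prod_congr rfl (fun j hj => ?_)
    have hjS := (Finset.mem_filter.1 hj).2
    rw [pmerge_pmerge_s8 hRp.1 (insert_Cafter_subset hjS)]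

end Aux6
section Aux7
variable {n : ℕ}

/-- order isomorphism `Fin Sᶜ.card ≃o {j // j ∉ S}` -/
noncomputable def oIsoO (S : Finset (Fin n)) : Fin (Sᶜ.card) ≃o {j : Fin n // j ∉ S} :=
  (Sᶜ.orderIsoOfFin rfl).trans
    { toEquiv := Equiv.subtypeEquivRight (fun x => Finset.mem_compl)
      map_rel_iff' := Iff.rfl }

noncomputable def oIsoI (S : Finset (Fin n)) (i : Fin n) :
    Fin ((S.erase i).card) ≃o {x : Fin n // x ∈ S.erase i} :=
  (S.erase i).orderIsoOfFin rfl

lemma aux_card (S : Finset (Fin n)) (i : Fin n) (hiS : i ∈ S) :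
    Sᶜ.card + 1 + (S.erase i).card = n := by
  have h1 : Sᶜ.card = n - S.card := by
    rw [Finset.card_compl, Fintype.card_fin]
  have h2 : (S.erase i).card = S.card - 1 := Finset.card_erase_of_mem hiS
  have h3 : S.card ≤ n := by
    have := Finset.card_le_univ S
    simpa using this
  have h4 : 1 ≤ S.card := Finset.card_pos.2 ⟨i, hiS⟩
  omega

noncomputable def posFn (S : Finset (Fin n)) (i : Fin n) (hiS : i ∈ S)
    (σ : Equiv.Perm {j : Fin n // j ∉ S}) (ρ : Equiv.Perm {x : Fin n // x ∈ S.erase i})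
    (j : Fin n) : Fin n :=
  if h : j ∉ S then
    ⟨((oIsoO S).symm (σ.symm ⟨j, h⟩) : Fin (Sᶜ.card)).val, by
      have h1 := aux_card S i hiS
      have h2 := ((oIsoO S).symm (σ.symm ⟨j, h⟩)).isLt
      omega⟩
  else if h' : j = i then ⟨Sᶜ.card, by have h1 := aux_card S i hiS; omega⟩
  else
    ⟨Sᶜ.card + 1 +
      ((oIsoI S i).symm (ρ.symm ⟨j, Finset.mem_erase.2 ⟨h', not_not.1 h⟩⟩)
        : Fin ((S.erase i).card)).val, by
      have h1 := aux_card S i hiS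
      have h2 := ((oIsoI S i).symm (ρ.symm ⟨j, Finset.mem_erase.2 ⟨h', not_not.1 h⟩⟩)).isLt
      omega⟩

lemma posFn_injective (S : Finset (Fin n)) (i : Fin n) (hiS : i ∈ S)
    (σ : Equiv.Perm {j : Fin n // j ∉ S}) (ρ : Equiv.Perm {x : Fin n // x ∈ S.erase i}) :
    Function.Injective (posFn S i hiS σ ρ) := by
  intro a b hab
  unfold posFn at hab
  by_cases ha : a ∉ S <;> by_cases hb : b ∉ S
  · rw [dif_pos ha, dif_pos hb, Fin.mk.injEq] at hab
    have h1 : (oIsoO S).symm (σ.symm ⟨a, ha⟩) = (oIsoO S).symm (σ.symm ⟨b, hb⟩) :=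
      Fin.ext hab
    have h2 := σ.symm.injective ((oIsoO S).symm.injective h1)
    exact congrArg Subtype.val h2
  · rw [dif_pos ha, dif_neg hb] at hab
    have h2 := ((oIsoO S).symm (σ.symm ⟨a, ha⟩)).isLt
    by_cases hbi : b = i
    · rw [dif_pos hbi, Fin.mk.injEq] at hab; omega
    · rw [dif_neg hbi, Fin.mk.injEq] at hab; omega
  · rw [dif_neg ha, dif_pos hb] at hab
    have h2 := ((oIsoO S).symm (σ.symm ⟨b, hb⟩)).isLt
    by_cases hai : a = i
    · rw [dif_pos hai, Fin.mk.injEq] at hab; omega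
    · rw [dif_neg hai, Fin.mk.injEq] at hab; omega
  · rw [dif_neg ha, dif_neg hb] at hab
    by_cases hai : a = i <;> by_cases hbi : b = i
    · rw [hai, hbi]
    · rw [dif_pos hai, dif_neg hbi, Fin.mk.injEq] at hab; omega
    · rw [dif_neg hai, dif_pos hbi, Fin.mk.injEq] at hab; omega
    · rw [dif_neg hai, dif_neg hbi, Fin.mk.injEq] at hab
      have h1 : (oIsoI S i).symm (ρ.symm ⟨a, Finset.mem_erase.2 ⟨hai, not_not.1 ha⟩⟩)
          = (oIsoI S i).symm (ρ.symm ⟨b, Finset.mem_erase.2 ⟨hbi, not_not.1 hb⟩⟩) :=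
        Fin.ext (by omega)
      have h2 := ρ.symm.injective ((oIsoI S i).symm.injective h1)
      exact congrArg Subtype.val h2

noncomputable def buildPerm (S : Finset (Fin n)) (i : Fin n) (hiS : i ∈ S)
    (σ : Equiv.Perm {j : Fin n // j ∉ S}) (ρ : Equiv.Perm {x : Fin n // x ∈ S.erase i}) :
    Equiv.Perm (Fin n) :=
  (Equiv.ofBijective (posFn S i hiS σ ρ)
    (Finite.injective_iff_bijective.1 (posFn_injective S i hiS σ ρ))).symm

lemma buildPerm_symm (S : Finset (Fin n)) (i : Fin n) (hiS : i ∈ S)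
    (σ : Equiv.Perm {j : Fin n // j ∉ S}) (ρ : Equiv.Perm {x : Fin n // x ∈ S.erase i})
    (j : Fin n) : (buildPerm S i hiS σ ρ).symm j = posFn S i hiS σ ρ j := rfl

end Aux7
section Aux8
variable {n : ℕ} {S : Finset (Fin n)} {i : Fin n}

lemma posFn_val_out (hiS : i ∈ S) (σ : Equiv.Perm {j : Fin n // j ∉ S})
    (ρ : Equiv.Perm {x : Fin n // x ∈ S.erase i}) {j : Fin n} (h : j ∉ S) :
    (posFn S i hiS σ ρ j).val = ((oIsoO S).symm (σ.symm ⟨j, h⟩)).val := by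
  rw [posFn, dif_pos h]

lemma posFn_val_i (hiS : i ∈ S) (σ : Equiv.Perm {j : Fin n // j ∉ S})
    (ρ : Equiv.Perm {x : Fin n // x ∈ S.erase i}) :
    (posFn S i hiS σ ρ i).val = Sᶜ.card := by
  rw [posFn, dif_neg (not_not_intro hiS), dif_pos rfl]

lemma posFn_val_in (hiS : i ∈ S) (σ : Equiv.Perm {j : Fin n // j ∉ S})
    (ρ : Equiv.Perm {x : Fin n // x ∈ S.erase i}) {j : Fin n} (h : j ∈ S.erase i) :
    (posFn S i hiS σ ρ j).val = Sᶜ.card + 1 +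
      ((oIsoI S i).symm (ρ.symm ⟨j, h⟩)).val := by
  obtain ⟨hji, hjS⟩ := Finset.mem_erase.1 h
  rw [posFn, dif_neg (not_not_intro hjS), dif_neg hji]

lemma buildPerm_Cafter_i (hiS : i ∈ S) (σ : Equiv.Perm {j : Fin n // j ∉ S})
    (ρ : Equiv.Perm {x : Fin n // x ∈ S.erase i}) :
    Cafter (buildPerm S i hiS σ ρ) i = S.erase i := by
  ext k
  rw [Cafter, Finset.mem_filter]
  simp only [Finset.mem_univ, true_and]
  rw [buildPerm_symm, buildPerm_symm, Fin.lt_def, posFn_val_i hiS σ ρ]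
  constructor
  · intro hlt
    by_cases hk : k ∉ S
    · rw [posFn_val_out hiS σ ρ hk] at hlt
      have := ((oIsoO S).symm (σ.symm ⟨k, hk⟩)).isLt
      omega
    · by_cases hki : k = i
      · subst hki; rw [posFn_val_i hiS σ ρ] at hlt; omega
      · exact Finset.mem_erase.2 ⟨hki, not_not.1 hk⟩
  · intro hk
    rw [posFn_val_in hiS σ ρ hk]
    omega

lemma buildPerm_spec (hiS : i ∈ S) (σ : Equiv.Perm {j : Fin n // j ∉ S})
    (ρ : Equiv.Perm {x : Fin n // x ∈ S.erase i}) :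
    insert i (Cafter (buildPerm S i hiS σ ρ) i) = S := by
  rw [buildPerm_Cafter_i hiS σ ρ, Finset.insert_erase hiS]

lemma buildPerm_Cafter_out (hiS : i ∈ S) (σ : Equiv.Perm {j : Fin n // j ∉ S})
    (ρ : Equiv.Perm {x : Fin n // x ∈ S.erase i}) {j : Fin n} (hj : j ∉ S) :
    Cafter (buildPerm S i hiS σ ρ) j = CafterOut S σ ⟨j, hj⟩ := by
  ext k
  rw [Cafter, Finset.mem_filter]
  simp only [Finset.mem_univ, true_and]
  rw [buildPerm_symm, buildPerm_symm, Fin.lt_def, posFn_val_out hiS σ ρ hj]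
  rw [CafterOut, Finset.mem_union, Finset.mem_filter]
  simp only [Finset.mem_univ, true_and]
  have hjlt := ((oIsoO S).symm (σ.symm ⟨j, hj⟩)).isLt
  constructor
  · intro hlt
    by_cases hk : k ∉ S
    · rw [posFn_val_out hiS σ ρ hk] at hlt
      refine Or.inr ⟨hk, ?_⟩
      have h1 : (oIsoO S).symm (σ.symm ⟨j, hj⟩) < (oIsoO S).symm (σ.symm ⟨k, hk⟩) :=
        Fin.lt_def.2 hlt
      have h2 : σ.symm ⟨j, hj⟩ < σ.symm ⟨k, hk⟩ := by
        rwa [OrderIso.lt_iff_lt] at h1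
      exact h2
    · exact Or.inl (not_not.1 hk)
  · intro hk
    rcases hk with hkS | ⟨hk, hlt⟩
    · by_cases hki : k = i
      · subst hki; rw [posFn_val_i hiS σ ρ]; omega
      · rw [posFn_val_in hiS σ ρ (Finset.mem_erase.2 ⟨hki, hkS⟩)]; omega
    · rw [posFn_val_out hiS σ ρ hk]
      have h1 : (oIsoO S).symm (σ.symm ⟨j, hj⟩) < (oIsoO S).symm (σ.symm ⟨k, hk⟩) := by
        rw [OrderIso.lt_iff_lt]
        exact hlt
      exact Fin.lt_def.1 h1

lemma buildPerm_injective (hiS : i ∈ S) :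
    Function.Injective (fun p : Equiv.Perm {j : Fin n // j ∉ S} ×
        Equiv.Perm {x : Fin n // x ∈ S.erase i} => buildPerm S i hiS p.1 p.2) := by
  rintro ⟨σ₁, ρ₁⟩ ⟨σ₂, ρ₂⟩ h
  simp only at h
  have hsym : ∀ j, posFn S i hiS σ₁ ρ₁ j = posFn S i hiS σ₂ ρ₂ j := by
    intro j
    rw [← buildPerm_symm S i hiS σ₁ ρ₁ j, ← buildPerm_symm S i hiS σ₂ ρ₂ j, h]
  have hσ : σ₁ = σ₂ := by
    have : σ₁.symm = σ₂.symm := by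
      apply Equiv.ext
      rintro ⟨j, hj⟩
      have h1 := hsym j
      have h2 : (posFn S i hiS σ₁ ρ₁ j).val = (posFn S i hiS σ₂ ρ₂ j).val :=
        congrArg Fin.val h1
      rw [posFn_val_out hiS σ₁ ρ₁ hj, posFn_val_out hiS σ₂ ρ₂ hj] at h2
      exact (oIsoO S).symm.injective (Fin.ext h2)
    calc σ₁ = σ₁.symm.symm := by rw [Equiv.symm_symm]
    _ = σ₂.symm.symm := by rw [this]
    _ = σ₂ := by rw [Equiv.symm_symm]
  have hρ : ρ₁ = ρ₂ := by
    have : ρ₁.symm = ρ₂.symm := by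
      apply Equiv.ext
      rintro ⟨j, hj⟩
      have h1 := hsym j
      have h2 : (posFn S i hiS σ₁ ρ₁ j).val = (posFn S i hiS σ₂ ρ₂ j).val :=
        congrArg Fin.val h1
      rw [posFn_val_in hiS σ₁ ρ₁ hj, posFn_val_in hiS σ₂ ρ₂ hj] at h2
      exact (oIsoI S i).symm.injective (Fin.ext (by omega))
    calc ρ₁ = ρ₁.symm.symm := by rw [Equiv.symm_symm]
    _ = ρ₂.symm.symm := by rw [this]
    _ = ρ₂ := by rw [Equiv.symm_symm]
  rw [Prod.mk.injEq]
  exact ⟨hσ, hρ⟩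

end Aux8
section Aux9
variable {n : ℕ} {S : Finset (Fin n)} {i : Fin n}

lemma card_lt_filter (π : Equiv.Perm (Fin n)) (a : Fin n) :
    (Finset.univ.filter (fun k => π.symm k < a)).card = a.val := by
  have himg : Finset.univ.filter (fun k => π.symm k < a) = (Finset.Iio a).image π := by
    ext k
    simp only [Finset.mem_filter, Finset.mem_univ, true_and, Finset.mem_image,
      Finset.mem_Iio]
    constructor
    · intro h; exact ⟨π.symm k, h, Equiv.apply_symm_apply _ _⟩
    · rintro ⟨y, hy, rfl⟩; rwa [Equiv.symm_apply_apply]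
  rw [himg, Finset.card_image_of_injective _ π.injective, Fin.card_Iio]

lemma buildPerm_surjective (hiS : i ∈ S) (π : Equiv.Perm (Fin n))
    (hπ : insert i (Cafter π i) = S) :
    ∃ (σ : Equiv.Perm {j : Fin n // j ∉ S}) (ρ : Equiv.Perm {x : Fin n // x ∈ S.erase i}),
      buildPerm S i hiS σ ρ = π := by
  have hiC : i ∉ Cafter π i := notMem_Cafter_self π i
  have hCi : Cafter π i = S.erase i := by rw [← hπ, Finset.erase_insert hiC]
  have f1 : ∀ k, k ∉ S ↔ π.symm k < π.symm i := by
    intro k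
    constructor
    · intro hk
      have hki : k ≠ i := fun h => hk (h ▸ hiS)
      have hkC : k ∉ Cafter π i := fun h => hk (hπ ▸ Finset.mem_insert_of_mem h)
      rw [Cafter, Finset.mem_filter] at hkC
      push_neg at hkC
      have hle : π.symm k ≤ π.symm i := hkC (Finset.mem_univ k)
      exact lt_of_le_of_ne hle (fun h => hki (π.symm.injective h))
    · intro hlt hk
      rw [← hπ] at hk
      rcases Finset.mem_insert.1 hk with rfl | hk'
      · exact absurd hlt (lt_irrefl _)
      · rw [Cafter, Finset.mem_filter] at hk'
        exact absurd (lt_trans hlt hk'.2) (lt_irrefl _)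
  have f2 : Sᶜ.card = (π.symm i).val := by
    have hcompl : Sᶜ = Finset.univ.filter (fun k => π.symm k < π.symm i) := by
      ext k
      rw [Finset.mem_compl, Finset.mem_filter, f1 k]
      simp
    rw [hcompl, card_lt_filter]
  have f3 : ∀ k ∈ S.erase i, Sᶜ.card < (π.symm k).val := by
    intro k hk
    rw [← hCi, Cafter, Finset.mem_filter] at hk
    rw [f2]
    exact hk.2
  have hgσb : ∀ a : {j : Fin n // j ∉ S}, (π.symm a.1).val < Sᶜ.card := by
    intro a
    rw [f2]
    exact (f1 a.1).1 a.2
  set gσ : {j : Fin n // j ∉ S} → {j : Fin n // j ∉ S} :=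
    fun a => (oIsoO S) ⟨(π.symm a.1).val, hgσb a⟩ with hgσ
  have hgσinj : Function.Injective gσ := by
    intro a b hab
    have h1 := (oIsoO S).injective hab
    rw [Fin.mk.injEq] at h1
    exact Subtype.ext (π.symm.injective (Fin.ext h1))
  set σ : Equiv.Perm {j : Fin n // j ∉ S} :=
    (Equiv.ofBijective gσ (Finite.injective_iff_bijective.1 hgσinj)).symm with hσdef
  have hσsymm : ∀ a, σ.symm a = gσ a := fun a => rfl
  have hgρb : ∀ x : {x : Fin n // x ∈ S.erase i},
      (π.symm x.1).val - (Sᶜ.card + 1) < (S.erase i).card := by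
    intro x
    have h1 := f3 x.1 x.2
    have h2 := (π.symm x.1).isLt
    have h3 := aux_card S i hiS
    omega
  set gρ : {x : Fin n // x ∈ S.erase i} → {x : Fin n // x ∈ S.erase i} :=
    fun x => (oIsoI S i) ⟨(π.symm x.1).val - (Sᶜ.card + 1), hgρb x⟩ with hgρ
  have hgρinj : Function.Injective gρ := by
    intro a b hab
    have h1 := (oIsoI S i).injective hab
    rw [Fin.mk.injEq] at h1
    have h2 := h1
    have h3 := f3 a.1 a.2
    have h4 := f3 b.1 b.2
    have h5 : (π.symm a.1).val = (π.symm b.1).val := by omega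
    exact Subtype.ext (π.symm.injective (Fin.ext h5))
  set ρ : Equiv.Perm {x : Fin n // x ∈ S.erase i} :=
    (Equiv.ofBijective gρ (Finite.injective_iff_bijective.1 hgρinj)).symm with hρdef
  have hρsymm : ∀ a, ρ.symm a = gρ a := fun a => rfl
  refine ⟨σ, ρ, ?_⟩
  have hkey : ∀ j, posFn S i hiS σ ρ j = π.symm j := by
    intro j
    by_cases hj : j ∉ S
    · apply Fin.ext
      rw [posFn_val_out hiS σ ρ hj, hσsymm, hgσ]
      simp only [OrderIso.symm_apply_apply]
    · by_cases hji : j = i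
      · subst hji
        apply Fin.ext
        rw [posFn_val_i hiS σ ρ, f2]
      · have hjm : j ∈ S.erase i := Finset.mem_erase.2 ⟨hji, not_not.1 hj⟩
        apply Fin.ext
        rw [posFn_val_in hiS σ ρ hjm, hρsymm, hgρ]
        simp only [OrderIso.symm_apply_apply]
        have h1 := f3 j hjm
        omega
  have hsymm : (buildPerm S i hiS σ ρ).symm = π.symm := by
    apply Equiv.ext
    intro j
    rw [buildPerm_symm, hkey]
  calc buildPerm S i hiS σ ρ = (buildPerm S i hiS σ ρ).symm.symm := by rw [Equiv.symm_symm]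
  _ = π.symm.symm := by rw [hsymm]
  _ = π := by rw [Equiv.symm_symm]

end Aux9
section Aux10
variable {n : ℕ} {S : Finset (Fin n)} {i : Fin n}

lemma picount (w : Weights n) (hiS : i ∈ S) (Q : Finset (Finset (Fin n))) :
    ∑ π ∈ Finset.univ.filter (fun π : Equiv.Perm (Fin n) => insert i (Cafter π i) = S),
      ∏ j ∈ Finset.univ.filter (fun j => j ∉ S),
        w j (Cafter π j) (pmerge Q (Cafter π j))
    = ((S.card - 1).factorial : ℝ) *
        ∑ σ : Equiv.Perm {j : Fin n // j ∉ S}, prOut w S Q σ := by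
  have himg : Finset.univ.filter (fun π : Equiv.Perm (Fin n) => insert i (Cafter π i) = S)
      = Finset.image (fun p : Equiv.Perm {j : Fin n // j ∉ S} ×
          Equiv.Perm {x : Fin n // x ∈ S.erase i} => buildPerm S i hiS p.1 p.2)
          Finset.univ := by
    ext π
    simp only [Finset.mem_filter, Finset.mem_univ, true_and, Finset.mem_image]
    constructor
    · intro hπ
      obtain ⟨σ, ρ, hb⟩ := buildPerm_surjective hiS π hπ
      exact ⟨⟨σ, ρ⟩, hb⟩
    · rintro ⟨⟨σ, ρ⟩, rfl⟩
      exact buildPerm_spec hiS σ ρ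
  rw [himg, Finset.sum_image (fun p _ q _ h => buildPerm_injective hiS h)]
  have hval : ∀ p : Equiv.Perm {j : Fin n // j ∉ S} ×
      Equiv.Perm {x : Fin n // x ∈ S.erase i},
      (∏ j ∈ Finset.univ.filter (fun j => j ∉ S),
        w j (Cafter (buildPerm S i hiS p.1 p.2) j)
          (pmerge Q (Cafter (buildPerm S i hiS p.1 p.2) j)))
      = prOut w S Q p.1 := by
    intro p
    rw [Finset.prod_subtype (p := fun j : Fin n => j ∉ S) (Finset.univ.filter (fun j : Fin n => j ∉ S))
      (fun x => by simp) (fun j => w j (Cafter (buildPerm S i hiS p.1 p.2) j)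
        (pmerge Q (Cafter (buildPerm S i hiS p.1 p.2) j))), prOut]
    refine Finset.prod_congr rfl ?_
    rintro ⟨a, ha⟩ _
    rw [buildPerm_Cafter_out hiS p.1 p.2 ha]
  rw [Finset.sum_congr rfl (fun p _ => hval p), Fintype.sum_prod_type]
  have hconst : ∀ σ : Equiv.Perm {j : Fin n // j ∉ S},
      (∑ _ρ : Equiv.Perm {x : Fin n // x ∈ S.erase i}, prOut w S Q σ)
      = ((S.card - 1).factorial : ℝ) * prOut w S Q σ := by
    intro σ
    rw [Finset.sum_const, Finset.card_univ, Fintype.card_perm, Fintype.card_coe,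
      Finset.card_erase_of_mem hiS, nsmul_eq_mul]
  rw [Finset.sum_congr rfl (fun σ _ => hconst σ), ← Finset.mul_sum]

end Aux10
/-- The extended Shapley value rewritten as a sum, over embedded coalitions
containing `i`, of weighted `α`-marginal contributions. -/
theorem stmt8 (n : ℕ) (w : Weights n) (hr : InRange w) (hnorm : Normalized w)
    (v : Game n) (hv : IsGame v) (i : Fin n) :
    esv w v i =
      ∑ P ∈ allPartitions n, ∑ S ∈ P.filter (fun S => i ∈ S),
        (((S.card - 1).factorial : ℝ) / (n.factorial : ℝ)) *
          (∑ π : Equiv.Perm {j : Fin n // j ∉ S}, prOut w S P π) * mc w v i S P := by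
  rw [esv]
  rw [Finset.sum_congr rfl (fun π _ => perPi hnorm v i π)]
  have hmaps : ∀ π : Equiv.Perm (Fin n), π ∈ Finset.univ →
      insert i (Cafter π i) ∈ Finset.univ.filter (fun S : Finset (Fin n) => i ∈ S) :=
    fun π _ => Finset.mem_filter.2 ⟨Finset.mem_univ _, Finset.mem_insert_self _ _⟩
  rw [← Finset.sum_fiberwise_of_maps_to hmaps]
  -- evaluate each fiber
  have hfiber : ∀ S ∈ Finset.univ.filter (fun S : Finset (Fin n) => i ∈ S),
      (∑ π ∈ Finset.univ.filter
          (fun π : Equiv.Perm (Fin n) => insert i (Cafter π i) = S),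
        ∑ Q ∈ (allPartitions n).filter (fun Q => insert i (Cafter π i) ∈ Q),
          (∏ j ∈ Finset.univ.filter (fun j => j ∉ insert i (Cafter π i)),
            w j (Cafter π j) (pmerge Q (Cafter π j))) *
            mc w v i (insert i (Cafter π i)) Q)
      = ∑ Q ∈ (allPartitions n).filter (fun Q => S ∈ Q),
          (((S.card - 1).factorial : ℝ) *
            ∑ σ : Equiv.Perm {j : Fin n // j ∉ S}, prOut w S Q σ) * mc w v i S Q := by
    intro S hS
    have hiS : i ∈ S := (Finset.mem_filter.1 hS).2
    have hstep : ∀ π ∈ Finset.univ.filter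
        (fun π : Equiv.Perm (Fin n) => insert i (Cafter π i) = S),
        (∑ Q ∈ (allPartitions n).filter (fun Q => insert i (Cafter π i) ∈ Q),
          (∏ j ∈ Finset.univ.filter (fun j => j ∉ insert i (Cafter π i)),
            w j (Cafter π j) (pmerge Q (Cafter π j))) *
            mc w v i (insert i (Cafter π i)) Q)
        = ∑ Q ∈ (allPartitions n).filter (fun Q => S ∈ Q),
            (∏ j ∈ Finset.univ.filter (fun j => j ∉ S),
              w j (Cafter π j) (pmerge Q (Cafter π j))) * mc w v i S Q := by
      intro π hπ
      rw [(Finset.mem_filter.1 hπ).2]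
    rw [Finset.sum_congr rfl hstep, Finset.sum_comm]
    refine Finset.sum_congr rfl (fun Q _ => ?_)
    rw [← Finset.sum_mul, picount w hiS Q]
  rw [Finset.sum_congr rfl hfiber]
  -- reorganize the right-hand side
  have hswap : (∑ P ∈ allPartitions n, ∑ S ∈ P.filter (fun S => i ∈ S),
      (((S.card - 1).factorial : ℝ) / (n.factorial : ℝ)) *
        (∑ π : Equiv.Perm {j : Fin n // j ∉ S}, prOut w S P π) * mc w v i S P)
      = ∑ S ∈ Finset.univ.filter (fun S : Finset (Fin n) => i ∈ S),
          ∑ P ∈ (allPartitions n).filter (fun Q => S ∈ Q),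
            (((S.card - 1).factorial : ℝ) / (n.factorial : ℝ)) *
              (∑ π : Equiv.Perm {j : Fin n // j ∉ S}, prOut w S P π) * mc w v i S P := by
    refine Finset.sum_comm' ?_
    intro P S
    simp only [Finset.mem_filter, Finset.mem_univ, true_and]
    tauto
  rw [hswap, Finset.mul_sum]
  refine Finset.sum_congr rfl (fun S _ => ?_)
  rw [Finset.mul_sum]
  refine Finset.sum_congr rfl (fun Q _ => ?_)
  rw [div_eq_mul_inv]
  ring
end

section
/- Let (S,P) be an embedded coalition and i ∉ S. In the game ṽ = c·[α_i(S,P)·e^{(S∪{i}, τ_i^S(P))} + e^{(S,P)}], player i is an α-null player: [mc^α_i(ṽ)](T,Q) = 0 for every embedded coalition (T,Q) with i ∈ T. Consequently, any value φ satisfying Additivity and the Null-Player Axiom^α satisfies φ_i(c·e^{(S,P)}) = −φ_i(c·α_i(S,P)·e^{(S∪{i}, τ_i^S(P))}). -/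
open Finset

open scoped Classical

/-!
By normalization of the weights, `mc^α_i(v)(T, Q)` is `v(T, Q)` minus the `α`-weighted average
of the values of `v` at the coalitions `(T \ {i}, τ_i^R(Q))` obtained by removing `i`. For
`v = e^{(S,P)}` this average is `α_i(S, P)·e^{(S ∪ {i}, τ_i^S(P))}(T, Q)`, because `(S, P)` is
reached only from `(S ∪ {i}, τ_i^S(P))`, by sending `i` back to its block of `P`. Hence the
two summands of `ṽ` cancel in `mc^α_i`, and additivity turns `φ_i(ṽ) = 0` into the identity.
-/

namespace IsPartition

variable {n : ℕ} {Q : Finset (Finset (Fin n))}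

theorem eq_of_mem_of_mem (hQ : IsPartition Q) {C D : Finset (Fin n)} (hC : C ∈ Q) (hD : D ∈ Q)
    {a : Fin n} (haC : a ∈ C) (haD : a ∈ D) : C = D := by
  obtain ⟨B, -, hB⟩ := hQ.2 a
  rw [hB C ⟨hC, haC⟩, hB D ⟨hD, haD⟩]

theorem notMem_of_mem_erase (hQ : IsPartition Q) {T R : Finset (Fin n)} (hT : T ∈ Q)
    {i : Fin n} (hiT : i ∈ T) (hR : R ∈ Q.erase T) : i ∉ R := fun hiR =>
  (mem_erase.1 hR).1 (hQ.eq_of_mem_of_mem (mem_erase.1 hR).2 hT hiR hiT)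

end IsPartition

section moveTo

variable {n : ℕ} {P : Finset (Finset (Fin n))} {i : Fin n} {S : Finset (Fin n)}

theorem mem_moveTo_s11 {X : Finset (Fin n)} :
    X ∈ moveTo P i S ↔ (∃ C ∈ P.erase S, C.erase i = X) ∨ X = insert i S ∨ X = ∅ := by
  simp only [moveTo, mem_union, mem_image, mem_singleton, or_assoc]

theorem insert_mem_moveTo_s11 : insert i S ∈ moveTo P i S :=
  mem_moveTo_s11.2 (Or.inr (Or.inl rfl))

theorem IsPartition.moveTo (hP : IsPartition P) (hS : S ∈ P) (hi : i ∉ S) :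
    IsPartition (moveTo P i S) := by
  refine ⟨mem_moveTo_s11.2 (Or.inr (Or.inr rfl)), fun a => ?_⟩
  by_cases hai : a = i
  · subst hai
    refine ⟨insert a S, ⟨insert_mem_moveTo_s11, mem_insert_self _ _⟩, ?_⟩
    rintro Y ⟨hY, haY⟩
    rcases mem_moveTo_s11.1 hY with ⟨C, -, rfl⟩ | rfl | rfl
    · exact absurd haY (notMem_erase _ _)
    · rfl
    · simp at haY
  obtain ⟨D, ⟨hD, haD⟩, hDu⟩ := hP.2 a
  by_cases hDS : D = S
  · subst hDS
    refine ⟨insert i D, ⟨insert_mem_moveTo_s11, mem_insert_of_mem haD⟩, ?_⟩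
    rintro Y ⟨hY, haY⟩
    rcases mem_moveTo_s11.1 hY with ⟨C, hC, rfl⟩ | rfl | rfl
    · exact absurd (hDu C ⟨(mem_erase.1 hC).2, (mem_erase.1 haY).2⟩) (mem_erase.1 hC).1
    · rfl
    · simp at haY
  refine ⟨D.erase i, ⟨mem_moveTo_s11.2 (Or.inl ⟨D, mem_erase.2 ⟨hDS, hD⟩, rfl⟩),
    mem_erase.2 ⟨hai, haD⟩⟩, ?_⟩
  rintro Y ⟨hY, haY⟩
  rcases mem_moveTo_s11.1 hY with ⟨C, hC, rfl⟩ | rfl | rfl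
  · rw [hDu C ⟨(mem_erase.1 hC).2, (mem_erase.1 haY).2⟩]
  · rcases mem_insert.1 haY with h | h
    · exact absurd h hai
    · exact absurd (hDu S ⟨hS, h⟩).symm hDS
  · simp at haY

theorem moveTo_moveTo_erase (hP : IsPartition P) {B : Finset (Fin n)} (hB : B ∈ P) (hiB : i ∈ B)
    (hS : S ∈ P) (hiS : i ∉ S) : moveTo (moveTo P i S) i (B.erase i) = P := by
  have hins : insert i (B.erase i) = B := insert_erase hiB
  ext X
  rw [mem_moveTo_s11]
  constructor
  · rintro (⟨Y, hY, rfl⟩ | rfl | rfl)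
    · obtain ⟨hYB, hYQ⟩ := mem_erase.1 hY
      rcases mem_moveTo_s11.1 hYQ with ⟨C, hC, rfl⟩ | rfl | rfl
      · obtain ⟨-, hCP⟩ := mem_erase.1 hC
        by_cases hiC : i ∈ C
        · exact absurd (by rw [hP.eq_of_mem_of_mem hCP hB hiC hiB]) hYB
        · rwa [erase_idem, erase_eq_of_notMem hiC]
      · rwa [erase_insert hiS]
      · rw [erase_empty]; exact hP.1
    · rwa [hins]
    · exact hP.1
  · intro hX
    by_cases hXB : X = B
    · exact Or.inr (Or.inl (by rw [hins, hXB]))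
    by_cases hXe : X = ∅
    · exact Or.inr (Or.inr hXe)
    refine Or.inl ?_
    have hiX : i ∉ X := fun h => hXB (hP.eq_of_mem_of_mem hX hB h hiB)
    have hXBi : X ≠ B.erase i := by
      rintro rfl
      obtain ⟨x, hx⟩ := nonempty_iff_ne_empty.2 hXe
      exact hXB (hP.eq_of_mem_of_mem hX hB hx (mem_of_mem_erase hx))
    have hBi : insert i S ≠ B.erase i := fun h =>
      notMem_erase i B (h ▸ mem_insert_self i S)
    by_cases hXS : X = S
    · exact ⟨insert i S, mem_erase.2 ⟨hBi, insert_mem_moveTo_s11⟩,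
        by rw [erase_insert hiS, hXS]⟩
    · exact ⟨X, mem_erase.2 ⟨hXBi, mem_moveTo_s11.2
        (Or.inl ⟨X, mem_erase.2 ⟨hXS, hX⟩, erase_eq_of_notMem hiX⟩)⟩,
        erase_eq_of_notMem hiX⟩

theorem eq_erase_of_moveTo_eq {Q : Finset (Finset (Fin n))} {R B : Finset (Fin n)}
    (hP : IsPartition P) (hB : B ∈ P) (hiB : i ∈ B) (hiR : i ∉ R) (h : moveTo Q i R = P) :
    R = B.erase i := by
  have hRB : insert i R = B :=
    hP.eq_of_mem_of_mem (h ▸ insert_mem_moveTo_s11) hB (mem_insert_self i R) hiB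
  rw [← hRB, erase_insert hiR]

end moveTo

section simpleGame

variable {n : ℕ}

theorem sgame_of_ne_left {S₀ T : Finset (Fin n)} {P₀ Q : Finset (Finset (Fin n))}
    (hT : T ≠ S₀) : sgame S₀ P₀ T Q = 0 :=
  if_neg fun h => hT h.1

theorem isGame_sgame {S : Finset (Fin n)} {P : Finset (Finset (Fin n))} (hP : IsPartition P)
    (hS : S ∈ P) (hSne : S ≠ ∅) : IsGame (sgame S P) := by
  rintro T Q h
  refine if_neg ?_
  rintro ⟨rfl, rfl⟩
  exact h ⟨hP, hS, hSne⟩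

theorem IsGame.const_mul {v : Game n} (hv : IsGame v) (c : ℝ) :
    IsGame fun T Q => c * v T Q := fun T Q h => by
  simp only [hv T Q h, mul_zero]

theorem IsGame.add {v₁ v₂ : Game n} (h₁ : IsGame v₁) (h₂ : IsGame v₂) :
    IsGame fun T Q => v₁ T Q + v₂ T Q := fun T Q h => by
  simp only [h₁ T Q h, h₂ T Q h, add_zero]

end simpleGame

section marginal

variable {n : ℕ} {w : Weights n}

def IsNullPlayer (w : Weights n) (v : Game n) (j : Fin n) : Prop :=
  ∀ T Q, IsPartition Q → T ∈ Q → j ∈ T → mc w v j T Q = 0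

theorem mc_eq_sub_sum (hnorm : Normalized w) (v : Game n) {j : Fin n}
    {T : Finset (Fin n)} {Q : Finset (Finset (Fin n))} (hQ : IsPartition Q) (hT : T ∈ Q)
    (hjT : j ∈ T) :
    mc w v j T Q = v T Q -
      ∑ R ∈ Q.erase T, w j (T.erase j) (moveTo Q j R) * v (T.erase j) (moveTo Q j R) := by
  simp only [mc, mul_sub, sum_sub_distrib, ← sum_mul, hnorm j T Q hQ hT hjT, one_mul]

/-- The only embedded coalition from which removing `i` leads to `(S, P)` is
`(S ∪ {i}, τ_i^S(P))`, and there `i` returns to its block of `P` with weight `α_i(S, P)`. -/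
theorem sum_weight_mul_sgame_moveTo {P Q : Finset (Finset (Fin n))} {S T : Finset (Fin n)}
    {i : Fin n} (hP : IsPartition P) (hS : S ∈ P) (hi : i ∉ S) (hQ : IsPartition Q)
    (hT : T ∈ Q) (hiT : i ∈ T) :
    ∑ R ∈ Q.erase T, w i (T.erase i) (moveTo Q i R) * sgame S P (T.erase i) (moveTo Q i R) =
      w i S P * sgame (insert i S) (moveTo P i S) T Q := by
  by_cases hTQ : T = insert i S ∧ Q = moveTo P i S
  · obtain ⟨rfl, rfl⟩ := hTQ
    obtain ⟨B, ⟨hB, hiB⟩, -⟩ := hP.2 i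
    have hback : moveTo (moveTo P i S) i (B.erase i) = P := moveTo_moveTo_erase hP hB hiB hS hi
    have hBi : B.erase i ∈ (moveTo P i S).erase (insert i S) := by
      refine mem_erase.2 ⟨fun h => notMem_erase i B (h ▸ mem_insert_self i S), ?_⟩
      exact mem_moveTo_s11.2 (Or.inl ⟨B, mem_erase.2 ⟨fun h => hi (h ▸ hiB), hB⟩, rfl⟩)
    rw [sum_eq_single_of_mem _ hBi]
    · simp [sgame, hback, erase_insert hi]
    · intro R hR hRB
      have hiR :=
        (hP.moveTo hS hi).notMem_of_mem_erase insert_mem_moveTo_s11 (mem_insert_self i S) hR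
      exact mul_eq_zero_of_right _
        (if_neg fun h => hRB (eq_erase_of_moveTo_eq hP hB hiB hiR h.2))
  · rw [show sgame (insert i S) (moveTo P i S) T Q = 0 from if_neg hTQ, mul_zero]
    refine sum_eq_zero fun R hR => mul_eq_zero_of_right _ (if_neg ?_)
    rintro ⟨hTS, hRP⟩
    have hback := moveTo_moveTo_erase hQ hT hiT (mem_of_mem_erase hR)
      (hQ.notMem_of_mem_erase hT hiT hR)
    rw [hRP, hTS] at hback
    exact hTQ ⟨by rw [← insert_erase hiT, hTS], hback.symm⟩

theorem isNullPlayer_weight_sgame_add_sgame (hnorm : Normalized w)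
    {P : Finset (Finset (Fin n))} {S : Finset (Fin n)} {i : Fin n}
    (hP : IsPartition P) (hS : S ∈ P) (hi : i ∉ S) (c : ℝ) :
    IsNullPlayer w (fun T Q => c * (w i S P * sgame (insert i S) (moveTo P i S) T Q +
      sgame S P T Q)) i := by
  intro T Q hQ hT hiT
  have hTS : T ≠ S := fun h => hi (h ▸ hiT)
  have hTiS : T.erase i ≠ insert i S := fun h => notMem_erase i T (h ▸ mem_insert_self i S)
  simp only [mc_eq_sub_sum hnorm _ hQ hT hiT, sgame_of_ne_left hTS, sgame_of_ne_left hTiS,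
    mul_zero, zero_add, add_zero, mul_left_comm _ c, ← mul_sum,
    sum_weight_mul_sgame_moveTo hP hS hi hQ hT hiT, sub_self]

theorem apply_eq_neg_of_isNullPlayer_add (φ : Game n → Fin n → ℝ)
    (hadd : ∀ v₁ v₂, IsGame v₁ → IsGame v₂ → ∀ j : Fin n,
      φ (fun T Q => v₁ T Q + v₂ T Q) j = φ v₁ j + φ v₂ j)
    (hnull : ∀ v, IsGame v → ∀ j : Fin n, IsNullPlayer w v j → φ v j = 0)
    {v₁ v₂ : Game n} (h₁ : IsGame v₁) (h₂ : IsGame v₂) {j : Fin n}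
    (h : IsNullPlayer w (fun T Q => v₁ T Q + v₂ T Q) j) : φ v₁ j = -φ v₂ j := by
  have hsum := hadd v₁ v₂ h₁ h₂ j
  rw [hnull _ (h₁.add h₂) j h] at hsum
  linarith

end marginal

theorem stmt11_general (n : ℕ) (w : Weights n) (hnorm : Normalized w)
    (S : Finset (Fin n)) (P : Finset (Finset (Fin n))) (hP : IsPartition P)
    (hS : S ∈ P) (hSne : S ≠ ∅) (i : Fin n) (hi : i ∉ S) (c : ℝ) :
    (∀ T Q, IsPartition Q → T ∈ Q → i ∈ T →
        mc w
          (fun T' Q' => c * (w i S P * sgame (insert i S) (moveTo P i S) T' Q' +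
            sgame S P T' Q'))
          i T Q = 0) ∧
    (∀ φ : Game n → Fin n → ℝ,
      (∀ v₁ v₂, IsGame v₁ → IsGame v₂ → ∀ j : Fin n,
        φ (fun T' Q' => v₁ T' Q' + v₂ T' Q') j = φ v₁ j + φ v₂ j) →
      (∀ v, IsGame v → ∀ j : Fin n,
        (∀ T Q, IsPartition Q → T ∈ Q → j ∈ T → mc w v j T Q = 0) → φ v j = 0) →
      φ (fun T' Q' => c * sgame S P T' Q') i =
        - φ (fun T' Q' => c * w i S P * sgame (insert i S) (moveTo P i S) T' Q') i) := by
  have hnullPlayer := isNullPlayer_weight_sgame_add_sgame hnorm hP hS hi c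
  refine ⟨hnullPlayer, fun φ hadd hnull => ?_⟩
  have hgame := isGame_sgame hP hS hSne
  have hgame' := isGame_sgame (hP.moveTo hS hi) insert_mem_moveTo_s11 (insert_ne_empty i S)
  refine apply_eq_neg_of_isNullPlayer_add φ hadd hnull (hgame.const_mul c)
    (hgame'.const_mul (c * w i S P)) ?_
  convert hnullPlayer using 3
  ring

/-- In the game `ṽ = c·[α_i(S,P)·e^{(S∪{i}, τ_i^S(P))} + e^{(S,P)}]`, player
`i` is an `α`-null player; consequently, any value satisfying Additivity and
the Null-Player Axiom^α gives
`φ_i(c·e^{(S,P)}) = −φ_i(c·α_i(S,P)·e^{(S∪{i}, τ_i^S(P))})`. -/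
theorem stmt11 (n : ℕ) (w : Weights n) (hr : InRange w) (hnorm : Normalized w)
    (S : Finset (Fin n)) (P : Finset (Finset (Fin n))) (hP : IsPartition P)
    (hS : S ∈ P) (hSne : S ≠ ∅) (i : Fin n) (hi : i ∉ S) (c : ℝ) :
    (∀ T Q, IsPartition Q → T ∈ Q → i ∈ T →
        mc w
          (fun T' Q' => c * (w i S P * sgame (insert i S) (moveTo P i S) T' Q' +
            sgame S P T' Q'))
          i T Q = 0) ∧
    (∀ φ : Game n → Fin n → ℝ,
      (∀ v₁ v₂, IsGame v₁ → IsGame v₂ → ∀ j : Fin n,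
        φ (fun T' Q' => v₁ T' Q' + v₂ T' Q') j = φ v₁ j + φ v₂ j) →
      (∀ v, IsGame v → ∀ j : Fin n,
        (∀ T Q, IsPartition Q → T ∈ Q → j ∈ T → mc w v j T Q = 0) → φ v j = 0) →
      φ (fun T' Q' => c * sgame S P T' Q') i =
        - φ (fun T' Q' => c * w i S P * sgame (insert i S) (moveTo P i S) T' Q') i) :=
  stmt11_general n w hnorm S P hP hS hSne i hi c
end
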